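/- arXiv:1105.5056 — 3 statements merged into one kernel-verified Lean document; each statement's English description precedes it below -/
import Mathlib

section
/- Let Γ be a finite simple graph and t a vertex of Γ. Then there is an injective group homomorphism from A(D_{st(t)}(Γ)) into A(Γ), where D_{st(t)}(Γ) is the double of Γ along the star of t. -/
open SimpleGraph

/-- The commutator relators of a right-angled Artin group on the graph `G`. -/
def raagRels {V : Type*} (G : SimpleGraph V) : Set (FreeGroup V) :=
  {r | ∃ u v : V, G.Adj u v ∧
    r = FreeGroup.of u * FreeGroup.of v * (FreeGroup.of u)⁻¹ * (FreeGroup.of v)⁻¹}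

/-- The right-angled Artin group `A(G)` of a simple graph `G`. -/
abbrev RAAG {V : Type*} (G : SimpleGraph V) : Type _ := PresentedGroup (raagRels G)

/-- The generator of `A(G)` corresponding to a vertex `v`. -/
def RAAG.gen {V : Type*} (G : SimpleGraph V) (v : V) : RAAG G := PresentedGroup.of v

/-- The vertex set of the extension graph: the elements of `A(G)` that are conjugate to
some generator. -/
def extVertex {V : Type*} (G : SimpleGraph V) : Set (RAAG G) :=
  {g | ∃ v : V, IsConj (RAAG.gen G v) g}

/-- The extension graph `G^e` of a graph `G`: vertices are the conjugates of generators of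
`A(G)`, two distinct such elements being adjacent iff they commute in `A(G)`. -/
def extGraph {V : Type*} (G : SimpleGraph V) : SimpleGraph (extVertex G) where
  Adj x y := x ≠ y ∧ Commute (x : RAAG G) (y : RAAG G)
  symm := by
    constructor
    intro x y h
    exact ⟨Ne.symm h.1, h.2.symm⟩
  loopless := by
    constructor
    intro x h
    exact h.1 rfl

/-- The star of a vertex `t`: the vertex `t` together with all of its neighbors. -/
def starSet {V : Type*} (G : SimpleGraph V) (t : V) : Set V :=
  insert t (G.neighborSet t)

/-- The double of `G` along the star of `t`: two copies of `G` glued along the induced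
subgraph on `starSet G t`. -/
def doubleStar {V : Type*} (G : SimpleGraph V) (t : V) :
    SimpleGraph (V ⊕ {v : V // v ∉ starSet G t}) where
  Adj x y :=
    match x, y with
    | Sum.inl a, Sum.inl b => G.Adj a b
    | Sum.inl a, Sum.inr b => a ∈ starSet G t ∧ G.Adj a b.1
    | Sum.inr a, Sum.inl b => b ∈ starSet G t ∧ G.Adj a.1 b
    | Sum.inr a, Sum.inr b => G.Adj a.1 b.1
  symm := by
    constructor
    rintro (a | a) (b | b) h
    · exact G.adj_symm h
    · exact ⟨h.1, G.adj_symm h.2⟩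
    · exact ⟨h.1, G.adj_symm h.2⟩
    · exact G.adj_symm h
  loopless := by
    constructor
    rintro (a | a) h
    · exact G.irrefl h
    · exact G.irrefl h

/-! ### Auxiliary material for the proof -/

section Aux

variable {V : Type*}

/-- Generators of adjacent vertices commute in the RAAG. -/
theorem RAAG.gen_commute {G : SimpleGraph V} {u v : V} (h : G.Adj u v) :
    Commute (RAAG.gen G u) (RAAG.gen G v) := by
  rw [← commutatorElement_eq_one_iff_commute]
  have hmem : (FreeGroup.of u * FreeGroup.of v * (FreeGroup.of u)⁻¹ * (FreeGroup.of v)⁻¹)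
      ∈ Subgroup.normalClosure (raagRels G) :=
    Subgroup.subset_normalClosure ⟨u, v, h, rfl⟩
  have h1 : (PresentedGroup.mk (raagRels G))
      (FreeGroup.of u * FreeGroup.of v * (FreeGroup.of u)⁻¹ * (FreeGroup.of v)⁻¹) = 1 :=
    (QuotientGroup.eq_one_iff _).mpr hmem
  simp only [map_mul, map_inv] at h1
  rw [commutatorElement_def]
  exact h1

/-- Universal property of the RAAG: a vertex map whose values commute along edges extends
to a group homomorphism. -/
def RAAG.lift {G : SimpleGraph V} {H : Type*} [Group H] (f : V → H)
    (hf : ∀ u v, G.Adj u v → Commute (f u) (f v)) : RAAG G →* H :=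
  PresentedGroup.toGroup (f := f) (by
    rintro r ⟨u, v, huv, rfl⟩
    simp only [map_mul, map_inv, FreeGroup.lift_apply_of]
    exact commutatorElement_eq_one_iff_commute.mpr (hf u v huv))

@[simp]
theorem RAAG.lift_gen {G : SimpleGraph V} {H : Type*} [Group H] (f : V → H)
    (hf : ∀ u v, G.Adj u v → Commute (f u) (f v)) (v : V) :
    RAAG.lift f hf (RAAG.gen G v) = f v :=
  PresentedGroup.toGroup.of _

@[simp]
theorem RAAG.lift_of {G : SimpleGraph V} {H : Type*} [Group H] (f : V → H)
    (hf : ∀ u v, G.Adj u v → Commute (f u) (f v)) (v : V) :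
    RAAG.lift f hf (PresentedGroup.of (rels := raagRels G) v) = f v :=
  PresentedGroup.toGroup.of _

theorem RAAG.hom_ext {G : SimpleGraph V} {H : Type*} [Group H] {φ ψ : RAAG G →* H}
    (h : ∀ v, φ (RAAG.gen G v) = ψ (RAAG.gen G v)) : φ = ψ :=
  PresentedGroup.ext h

theorem commute_conj {H : Type*} [Group H] {a b : H} (h : Commute a b) (g : H) :
    Commute (g * a * g⁻¹) (g * b * g⁻¹) := by
  simpa [MulAut.conj_apply] using h.map (MulAut.conj g).toMonoidHom

variable (G : SimpleGraph V) (t : V)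

theorem star_cases {v : V} (h : v ∈ starSet G t) : v = t ∨ G.Adj t v := by
  rcases h with h | h
  · exact Or.inl h
  · exact Or.inr h

theorem t_mem_star : t ∈ starSet G t := Set.mem_insert _ _

theorem adj_mem_star {v : V} (h : G.Adj t v) : v ∈ starSet G t := Set.mem_insert_iff.mpr (Or.inr h)

@[simp] theorem doubleStar_adj_inl_inl {a b : V} :
    (doubleStar G t).Adj (Sum.inl a) (Sum.inl b) ↔ G.Adj a b := Iff.rfl

@[simp] theorem doubleStar_adj_inl_inr {a : V} {b : {v : V // v ∉ starSet G t}} :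
    (doubleStar G t).Adj (Sum.inl a) (Sum.inr b) ↔ a ∈ starSet G t ∧ G.Adj a b.1 := Iff.rfl

@[simp] theorem doubleStar_adj_inr_inl {a : {v : V // v ∉ starSet G t}} {b : V} :
    (doubleStar G t).Adj (Sum.inr a) (Sum.inl b) ↔ b ∈ starSet G t ∧ G.Adj a.1 b := Iff.rfl

@[simp] theorem doubleStar_adj_inr_inr {a b : {v : V // v ∉ starSet G t}} :
    (doubleStar G t).Adj (Sum.inr a) (Sum.inr b) ↔ G.Adj a.1 b.1 := Iff.rfl

/-- The distinguished generator `t` (first copy) of the RAAG of the double. -/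
noncomputable def aGen : RAAG (doubleStar G t) := RAAG.gen _ (Sum.inl t)

theorem aGen_comm {v : V} (h : v ∈ starSet G t) :
    Commute (aGen G t) (RAAG.gen (doubleStar G t) (Sum.inl v)) := by
  rcases star_cases G t h with rfl | h
  · exact Commute.refl _
  · exact RAAG.gen_commute ((doubleStar_adj_inl_inl G t).mpr h)

open scoped Classical in
/-- Generator map of the shift automorphism. -/
noncomputable def alphaFun : V ⊕ {v : V // v ∉ starSet G t} → RAAG (doubleStar G t) := fun x =>
  match x with
  | Sum.inl v => if h : v ∈ starSet G t then RAAG.gen _ (Sum.inl v)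
      else RAAG.gen _ (Sum.inr ⟨v, h⟩)
  | Sum.inr w => aGen G t * RAAG.gen _ (Sum.inl w.1) * (aGen G t)⁻¹

theorem alphaFun_comm : ∀ x y, (doubleStar G t).Adj x y →
    Commute (alphaFun G t x) (alphaFun G t y) := by
  rintro (a | a) (b | b) hxy
  · rw [doubleStar_adj_inl_inl] at hxy
    simp only [alphaFun]
    split_ifs with h1 h2 h2
    · exact RAAG.gen_commute ((doubleStar_adj_inl_inl G t).mpr hxy)
    · exact RAAG.gen_commute ((doubleStar_adj_inl_inr G t).mpr ⟨h1, hxy⟩)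
    · exact RAAG.gen_commute ((doubleStar_adj_inr_inl G t).mpr ⟨h2, hxy⟩)
    · exact RAAG.gen_commute ((doubleStar_adj_inr_inr G t).mpr hxy)
  · rw [doubleStar_adj_inl_inr] at hxy
    simp only [alphaFun, dif_pos hxy.1]
    have c1 : Commute (RAAG.gen (doubleStar G t) (Sum.inl a)) (aGen G t) :=
      (aGen_comm G t hxy.1).symm
    have c2 : Commute (RAAG.gen (doubleStar G t) (Sum.inl a))
        (RAAG.gen (doubleStar G t) (Sum.inl b.1)) :=
      RAAG.gen_commute ((doubleStar_adj_inl_inl G t).mpr hxy.2)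
    exact (c1.mul_right c2).mul_right c1.inv_right
  · rw [doubleStar_adj_inr_inl] at hxy
    simp only [alphaFun, dif_pos hxy.1]
    have c1 : Commute (RAAG.gen (doubleStar G t) (Sum.inl b)) (aGen G t) :=
      (aGen_comm G t hxy.1).symm
    have c2 : Commute (RAAG.gen (doubleStar G t) (Sum.inl b))
        (RAAG.gen (doubleStar G t) (Sum.inl a.1)) :=
      RAAG.gen_commute ((doubleStar_adj_inl_inl G t).mpr hxy.2.symm)
    exact ((c1.mul_right c2).mul_right c1.inv_right).symm
  · rw [doubleStar_adj_inr_inr] at hxy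
    simp only [alphaFun]
    exact commute_conj (RAAG.gen_commute ((doubleStar_adj_inl_inl G t).mpr hxy)) _

noncomputable def alphaHom : RAAG (doubleStar G t) →* RAAG (doubleStar G t) :=
  RAAG.lift (alphaFun G t) (alphaFun_comm G t)

open scoped Classical in
/-- Generator map of the inverse of the shift automorphism. -/
noncomputable def betaFun : V ⊕ {v : V // v ∉ starSet G t} → RAAG (doubleStar G t) := fun x =>
  match x with
  | Sum.inl v => if h : v ∈ starSet G t then RAAG.gen _ (Sum.inl v)
      else (aGen G t)⁻¹ * RAAG.gen _ (Sum.inr ⟨v, h⟩) * aGen G t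
  | Sum.inr w => RAAG.gen _ (Sum.inl w.1)

theorem betaFun_comm : ∀ x y, (doubleStar G t).Adj x y →
    Commute (betaFun G t x) (betaFun G t y) := by
  rintro (a | a) (b | b) hxy
  · rw [doubleStar_adj_inl_inl] at hxy
    simp only [betaFun]
    split_ifs with h1 h2 h2
    · exact RAAG.gen_commute ((doubleStar_adj_inl_inl G t).mpr hxy)
    · have c1 : Commute (RAAG.gen (doubleStar G t) (Sum.inl a)) (aGen G t) :=
        (aGen_comm G t h1).symm
      have c2 : Commute (RAAG.gen (doubleStar G t) (Sum.inl a))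
          (RAAG.gen (doubleStar G t) (Sum.inr ⟨b, h2⟩)) :=
        RAAG.gen_commute ((doubleStar_adj_inl_inr G t).mpr ⟨h1, hxy⟩)
      exact (c1.inv_right.mul_right c2).mul_right c1
    · have c1 : Commute (RAAG.gen (doubleStar G t) (Sum.inl b)) (aGen G t) :=
        (aGen_comm G t h2).symm
      have c2 : Commute (RAAG.gen (doubleStar G t) (Sum.inl b))
          (RAAG.gen (doubleStar G t) (Sum.inr ⟨a, h1⟩)) :=
        RAAG.gen_commute ((doubleStar_adj_inl_inr G t).mpr ⟨h2, hxy.symm⟩)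
      exact ((c1.inv_right.mul_right c2).mul_right c1).symm
    · have := commute_conj (RAAG.gen_commute
        ((doubleStar_adj_inr_inr G t (a := ⟨a, h1⟩) (b := ⟨b, h2⟩)).mpr hxy)) (aGen G t)⁻¹
      simpa using this
  · rw [doubleStar_adj_inl_inr] at hxy
    simp only [betaFun, dif_pos hxy.1]
    exact RAAG.gen_commute ((doubleStar_adj_inl_inl G t).mpr hxy.2)
  · rw [doubleStar_adj_inr_inl] at hxy
    simp only [betaFun, dif_pos hxy.1]
    exact RAAG.gen_commute ((doubleStar_adj_inl_inl G t).mpr hxy.2)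
  · rw [doubleStar_adj_inr_inr] at hxy
    simp only [betaFun]
    exact RAAG.gen_commute ((doubleStar_adj_inl_inl G t).mpr hxy)

noncomputable def betaHom : RAAG (doubleStar G t) →* RAAG (doubleStar G t) :=
  RAAG.lift (betaFun G t) (betaFun_comm G t)

theorem beta_alpha : (betaHom G t).comp (alphaHom G t) = MonoidHom.id _ := by
  apply RAAG.hom_ext
  rintro (v | w)
  · by_cases h : v ∈ starSet G t
    · simp [alphaHom, betaHom, alphaFun, betaFun, RAAG.gen, dif_pos h]
    · simp [alphaHom, betaHom, alphaFun, betaFun, RAAG.gen, dif_neg h]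
  · have hw : w.1 ∉ starSet G t := w.2
    simp only [MonoidHom.comp_apply, MonoidHom.id_apply]
    show betaHom G t (alphaHom G t (RAAG.gen _ (Sum.inr w))) = RAAG.gen _ (Sum.inr w)
    rw [alphaHom, RAAG.lift_gen]
    simp only [alphaFun, map_mul, map_inv, betaHom, aGen, RAAG.lift_gen]
    simp only [betaFun, dif_pos (t_mem_star G t), dif_neg hw, aGen]
    rw [show (⟨w.1, hw⟩ : {v : V // v ∉ starSet G t}) = w from rfl]
    group

theorem alpha_beta : (alphaHom G t).comp (betaHom G t) = MonoidHom.id _ := by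
  apply RAAG.hom_ext
  rintro (v | w)
  · by_cases h : v ∈ starSet G t
    · simp [alphaHom, betaHom, alphaFun, betaFun, RAAG.gen, dif_pos h]
    · simp only [MonoidHom.comp_apply, MonoidHom.id_apply]
      show alphaHom G t (betaHom G t (RAAG.gen _ (Sum.inl v))) = RAAG.gen _ (Sum.inl v)
      rw [betaHom, RAAG.lift_gen]
      simp only [betaFun, dif_neg h, map_mul, map_inv, alphaHom, aGen, RAAG.lift_gen]
      simp only [alphaFun, dif_pos (t_mem_star G t), dif_neg h, aGen]
      group
  · have hw : w.1 ∉ starSet G t := w.2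
    simp only [MonoidHom.comp_apply, MonoidHom.id_apply]
    show alphaHom G t (betaHom G t (RAAG.gen _ (Sum.inr w))) = RAAG.gen _ (Sum.inr w)
    rw [betaHom, RAAG.lift_gen]
    simp only [betaFun, alphaHom, RAAG.lift_gen]
    simp only [alphaFun, dif_neg hw]

/-- The shift automorphism of the RAAG of the double. -/
noncomputable def alphaAut : MulAut (RAAG (doubleStar G t)) :=
  MonoidHom.toMulEquiv (alphaHom G t) (betaHom G t) (beta_alpha G t) (alpha_beta G t)

theorem alphaAut_apply (x : RAAG (doubleStar G t)) : alphaAut G t x = alphaHom G t x := rfl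

theorem alphaAut_fixes_a : alphaAut G t (aGen G t) = aGen G t := by
  show alphaHom G t (RAAG.gen _ (Sum.inl t)) = _
  rw [alphaHom, RAAG.lift_gen]
  simp [alphaFun, dif_pos (t_mem_star G t), aGen]

theorem alphaAut_zpow_fixes_a (k : ℤ) : (alphaAut G t ^ k) (aGen G t) = aGen G t := by
  have hinv : (alphaAut G t)⁻¹ (aGen G t) = aGen G t := by
    rw [MulAut.inv_def]
    conv_lhs => rw [← alphaAut_fixes_a G t]
    exact (alphaAut G t).symm_apply_apply _
  induction k using Int.induction_on with
  | zero => rfl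
  | succ k ih =>
      rw [zpow_add_one, MulAut.mul_apply, alphaAut_fixes_a, ih]
  | pred k ih =>
      rw [zpow_sub_one, MulAut.mul_apply, hinv, ih]

/-- `α² = conjugation by the generator of `t` (first copy)`. -/
theorem alphaAut_sq (n : RAAG (doubleStar G t)) :
    alphaAut G t (alphaAut G t n) = aGen G t * n * (aGen G t)⁻¹ := by
  have : (alphaHom G t).comp (alphaHom G t) = (MulAut.conj (aGen G t)).toMonoidHom := by
    apply RAAG.hom_ext
    rintro (v | w)
    · simp only [MonoidHom.comp_apply, MulEquiv.coe_toMonoidHom, MulAut.conj_apply]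
      show alphaHom G t (alphaHom G t (RAAG.gen _ (Sum.inl v))) = _
      by_cases h : v ∈ starSet G t
      · rw [alphaHom, RAAG.lift_gen]
        simp only [alphaFun, dif_pos h, RAAG.lift_gen]
        rw [(aGen_comm G t h).eq, mul_inv_cancel_right]
      · rw [alphaHom, RAAG.lift_gen]
        simp only [alphaFun, dif_neg h, RAAG.lift_gen]
    · simp only [MonoidHom.comp_apply, MulEquiv.coe_toMonoidHom, MulAut.conj_apply]
      show alphaHom G t (alphaHom G t (RAAG.gen _ (Sum.inr w))) = _
      rw [alphaHom, RAAG.lift_gen]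
      simp only [alphaFun, map_mul, map_inv, aGen, RAAG.lift_gen,
        dif_pos (t_mem_star G t), dif_neg w.2]
  exact DFunLike.congr_fun this n

/-- The action of `ℤ` on `A(D)` via powers of the shift automorphism. -/
noncomputable def phiZ : Multiplicative ℤ →* MulAut (RAAG (doubleStar G t)) :=
  zpowersHom _ (alphaAut G t)

/-- The semidirect product `A(D) ⋊ ℤ`. -/
noncomputable abbrev NSD := RAAG (doubleStar G t) ⋊[phiZ G t] Multiplicative ℤ

/-- The central element `a⁻¹ · u²` of `A(D) ⋊ ℤ`. -/
noncomputable def zEl : NSD G t :=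
  SemidirectProduct.inl (aGen G t)⁻¹ * SemidirectProduct.inr (Multiplicative.ofAdd 2)

theorem phiZ_fixes_a (x : Multiplicative ℤ) : phiZ G t x (aGen G t) = aGen G t :=
  alphaAut_zpow_fixes_a G t _

theorem phiZ_ofAdd_two (n : RAAG (doubleStar G t)) :
    phiZ G t (Multiplicative.ofAdd 2) n = aGen G t * n * (aGen G t)⁻¹ := by
  have h2 : (alphaAut G t) ^ (2 : ℤ) = alphaAut G t * alphaAut G t := zpow_two _
  calc phiZ G t (Multiplicative.ofAdd 2) n = ((alphaAut G t) ^ (2 : ℤ)) n := rfl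
    _ = alphaAut G t (alphaAut G t n) := by rw [h2, MulAut.mul_apply]
    _ = _ := alphaAut_sq G t n

theorem zEl_central (g : NSD G t) : Commute g (zEl G t) := by
  have hz : zEl G t = ⟨(aGen G t)⁻¹, Multiplicative.ofAdd 2⟩ := by
    rw [zEl, ← SemidirectProduct.mk_eq_inl_mul_inr]
  unfold Commute SemiconjBy
  rw [hz]
  ext
  · simp only [SemidirectProduct.mul_left]
    rw [phiZ_ofAdd_two, map_inv, phiZ_fixes_a]
    group
  · simp only [SemidirectProduct.mul_right]
    exact mul_comm (G := Multiplicative ℤ) _ _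

instance zpowers_zEl_normal : (Subgroup.zpowers (zEl G t)).Normal := by
  constructor
  intro n hn g
  obtain ⟨k, rfl⟩ := Subgroup.mem_zpowers_iff.mp hn
  rw [((zEl_central G t g).zpow_right k).eq, mul_inv_cancel_right]
  exact Subgroup.zpow_mem_zpowers _ _

/-- The quotient of `A(D) ⋊ ℤ` by the central element. -/
noncomputable def quotMap : NSD G t →* NSD G t ⧸ Subgroup.zpowers (zEl G t) :=
  QuotientGroup.mk' _

/-- The composite `A(D) → A(D) ⋊ ℤ → quotient`. -/
noncomputable def theta : RAAG (doubleStar G t) →* NSD G t ⧸ Subgroup.zpowers (zEl G t) :=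
  (quotMap G t).comp SemidirectProduct.inl

theorem theta_injective : Function.Injective (theta G t) := by
  rw [injective_iff_map_eq_one]
  intro x hx
  have hmem : SemidirectProduct.inl (φ := phiZ G t) x ∈ Subgroup.zpowers (zEl G t) :=
    (QuotientGroup.eq_one_iff _).mp hx
  obtain ⟨k, hk⟩ := Subgroup.mem_zpowers_iff.mp hmem
  have h3 := congrArg SemidirectProduct.rightHom hk
  rw [map_zpow, SemidirectProduct.rightHom_inl, zEl, map_mul,
    SemidirectProduct.rightHom_inl, SemidirectProduct.rightHom_inr, one_mul] at h3
  have hk0 : k = 0 := by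
    have h5 := congrArg Multiplicative.toAdd h3
    rw [toAdd_zpow] at h5
    simp only [toAdd_ofAdd, toAdd_one, smul_eq_mul] at h5
    omega
  rw [hk0, zpow_zero] at hk
  have : SemidirectProduct.inl (φ := phiZ G t) x = SemidirectProduct.inl 1 := by
    rw [map_one]; exact hk.symm
  exact SemidirectProduct.inl_injective this

theorem alpha_fixes_star {v : V} (h : v ∈ starSet G t) :
    alphaAut G t (RAAG.gen (doubleStar G t) (Sum.inl v)) = RAAG.gen _ (Sum.inl v) := by
  rw [alphaAut_apply, alphaHom, RAAG.lift_gen]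
  simp [alphaFun, dif_pos h]

theorem alpha_moves {v : V} (h : v ∉ starSet G t) :
    alphaAut G t (RAAG.gen (doubleStar G t) (Sum.inl v)) = RAAG.gen _ (Sum.inr ⟨v, h⟩) := by
  rw [alphaAut_apply, alphaHom, RAAG.lift_gen]
  simp [alphaFun, dif_neg h]

theorem phiZ_one_apply (n : RAAG (doubleStar G t)) :
    phiZ G t (Multiplicative.ofAdd 1) n = alphaAut G t n := by
  show ((alphaAut G t) ^ (1 : ℤ)) n = _
  rw [zpow_one]

/-- Commutation in the semidirect product between `inr (ofAdd 1)` and star generators. -/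
theorem inr_comm_star {v : V} (h : v ∈ starSet G t) :
    Commute (SemidirectProduct.inr (φ := phiZ G t) (Multiplicative.ofAdd 1))
      (SemidirectProduct.inl (RAAG.gen (doubleStar G t) (Sum.inl v))) := by
  have key := SemidirectProduct.inl_aut (φ := phiZ G t) (Multiplicative.ofAdd 1)
    (RAAG.gen (doubleStar G t) (Sum.inl v))
  rw [phiZ_one_apply, alpha_fixes_star G t h, map_inv] at key
  unfold Commute SemiconjBy
  conv_rhs => rw [key]
  rw [inv_mul_cancel_right]

open scoped Classical in
/-- Generator map of `ψ : A(Γ) → (A(D) ⋊ ℤ)/⟨z⟩`. -/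
noncomputable def psiFun : V → NSD G t ⧸ Subgroup.zpowers (zEl G t) := fun v =>
  if v = t then quotMap G t (SemidirectProduct.inr (Multiplicative.ofAdd 1))
  else quotMap G t (SemidirectProduct.inl (RAAG.gen (doubleStar G t) (Sum.inl v)))

theorem psiFun_t : psiFun G t t
    = quotMap G t (SemidirectProduct.inr (Multiplicative.ofAdd 1)) := if_pos rfl

theorem psiFun_ne {v : V} (h : v ≠ t) : psiFun G t v
    = quotMap G t (SemidirectProduct.inl (RAAG.gen (doubleStar G t) (Sum.inl v))) := if_neg h

theorem psiFun_comm : ∀ u v, G.Adj u v → Commute (psiFun G t u) (psiFun G t v) := by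
  intro u v huv
  by_cases hu : u = t <;> by_cases hv : v = t
  · refine absurd huv ?_
    rw [hu, hv]
    exact G.loopless.irrefl t
  · rw [hu] at huv ⊢
    rw [psiFun_t, psiFun_ne G t hv]
    exact (inr_comm_star G t (adj_mem_star G t huv)).map (quotMap G t)
  · rw [hv] at huv ⊢
    rw [psiFun_t, psiFun_ne G t hu]
    exact ((inr_comm_star G t (adj_mem_star G t huv.symm)).map (quotMap G t)).symm
  · rw [psiFun_ne G t hu, psiFun_ne G t hv]
    exact ((RAAG.gen_commute ((doubleStar_adj_inl_inl G t).mpr huv)).map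
      SemidirectProduct.inl).map (quotMap G t)

noncomputable def psiHom : RAAG G →* NSD G t ⧸ Subgroup.zpowers (zEl G t) :=
  RAAG.lift (psiFun G t) (psiFun_comm G t)

open scoped Classical in
/-- Generator map of the embedding `A(D) → A(Γ)`. -/
noncomputable def fFun : V ⊕ {v : V // v ∉ starSet G t} → RAAG G := fun x =>
  match x with
  | Sum.inl v => if v = t then (RAAG.gen G t) ^ 2 else RAAG.gen G v
  | Sum.inr w => RAAG.gen G t * RAAG.gen G w.1 * (RAAG.gen G t)⁻¹

theorem fFun_inl_t : fFun G t (Sum.inl t) = (RAAG.gen G t) ^ 2 := if_pos rfl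

theorem fFun_inl_ne {v : V} (h : v ≠ t) : fFun G t (Sum.inl v) = RAAG.gen G v := if_neg h

theorem fFun_inr (w : {v : V // v ∉ starSet G t}) :
    fFun G t (Sum.inr w) = RAAG.gen G t * RAAG.gen G w.1 * (RAAG.gen G t)⁻¹ := rfl

theorem fFun_comm : ∀ x y, (doubleStar G t).Adj x y → Commute (fFun G t x) (fFun G t y) := by
  rintro (a | a) (b | b) hxy
  · rw [doubleStar_adj_inl_inl] at hxy
    by_cases h1 : a = t <;> by_cases h2 : b = t
    · refine absurd hxy ?_
      rw [h1, h2]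
      exact G.loopless.irrefl t
    · rw [h1] at hxy ⊢
      rw [fFun_inl_t, fFun_inl_ne G t h2]
      exact (RAAG.gen_commute hxy).pow_left 2
    · rw [h2] at hxy ⊢
      rw [fFun_inl_t, fFun_inl_ne G t h1]
      exact ((RAAG.gen_commute hxy.symm).pow_left 2).symm
    · rw [fFun_inl_ne G t h1, fFun_inl_ne G t h2]
      exact RAAG.gen_commute hxy
  · rw [doubleStar_adj_inl_inr] at hxy
    have hat : a ≠ t := by
      intro h
      apply b.2
      apply adj_mem_star G t
      rw [h] at hxy
      exact hxy.2
    rw [fFun_inl_ne G t hat, fFun_inr]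
    have c1 : Commute (RAAG.gen G a) (RAAG.gen G t) := by
      rcases star_cases G t hxy.1 with rfl | h
      · exact absurd rfl hat
      · exact (RAAG.gen_commute h).symm
    have c2 : Commute (RAAG.gen G a) (RAAG.gen G b.1) := RAAG.gen_commute hxy.2
    exact (c1.mul_right c2).mul_right c1.inv_right
  · rw [doubleStar_adj_inr_inl] at hxy
    have hbt : b ≠ t := by
      intro h
      apply a.2
      apply adj_mem_star G t
      rw [h] at hxy
      exact hxy.2.symm
    rw [fFun_inl_ne G t hbt, fFun_inr]
    have c1 : Commute (RAAG.gen G b) (RAAG.gen G t) := by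
      rcases star_cases G t hxy.1 with rfl | h
      · exact absurd rfl hbt
      · exact (RAAG.gen_commute h).symm
    have c2 : Commute (RAAG.gen G b) (RAAG.gen G a.1) := RAAG.gen_commute hxy.2.symm
    exact ((c1.mul_right c2).mul_right c1.inv_right).symm
  · rw [doubleStar_adj_inr_inr] at hxy
    rw [fFun_inr, fFun_inr]
    exact commute_conj (RAAG.gen_commute hxy) _

noncomputable def fHom : RAAG (doubleStar G t) →* RAAG G :=
  RAAG.lift (fFun G t) (fFun_comm G t)

theorem psi_comp_f : (psiHom G t).comp (fHom G t) = theta G t := by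
  apply RAAG.hom_ext
  rintro (v | w)
  · simp only [MonoidHom.comp_apply]
    show psiHom G t (fHom G t (RAAG.gen _ (Sum.inl v))) = theta G t (RAAG.gen _ (Sum.inl v))
    rw [fHom, RAAG.lift_gen]
    by_cases hv : v = t
    · rw [hv]
      rw [fFun_inl_t, map_pow, psiHom, RAAG.lift_gen, psiFun_t, ← map_pow]
      rw [show ((SemidirectProduct.inr (φ := phiZ G t) (Multiplicative.ofAdd 1)) ^ 2 :
          NSD G t) = SemidirectProduct.inr ((Multiplicative.ofAdd (1:ℤ)) ^ 2) from
          (map_pow _ _ _).symm]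
      rw [show ((Multiplicative.ofAdd (1:ℤ)) ^ 2) = Multiplicative.ofAdd 2 from by
        rw [← ofAdd_nsmul]; norm_num]
      have : theta G t (RAAG.gen _ (Sum.inl t))
          = quotMap G t (SemidirectProduct.inl (RAAG.gen (doubleStar G t) (Sum.inl t))) := rfl
      rw [this, quotMap, QuotientGroup.mk'_eq_mk']
      refine ⟨(zEl G t)⁻¹, Subgroup.inv_mem _ (Subgroup.mem_zpowers _), ?_⟩
      rw [zEl, mul_inv_rev, ← mul_assoc, mul_inv_cancel, one_mul, ← map_inv, inv_inv]
      rfl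
    · rw [fFun_inl_ne G t hv, psiHom, RAAG.lift_gen, psiFun_ne G t hv]
      rfl
  · simp only [MonoidHom.comp_apply]
    show psiHom G t (fHom G t (RAAG.gen _ (Sum.inr w))) = theta G t (RAAG.gen _ (Sum.inr w))
    rw [fHom, RAAG.lift_gen, fFun_inr]
    have hwt : w.1 ≠ t := by
      intro h
      apply w.2
      rw [h]
      exact t_mem_star G t
    rw [map_mul, map_mul, map_inv]
    rw [show psiHom G t (RAAG.gen G t) = psiFun G t t from RAAG.lift_gen _ _ _]
    rw [show psiHom G t (RAAG.gen G w.1) = psiFun G t w.1 from RAAG.lift_gen _ _ _]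
    rw [psiFun_t, psiFun_ne G t hwt]
    rw [← map_inv (quotMap G t), ← map_mul, ← map_mul]
    have key : (SemidirectProduct.inr (φ := phiZ G t) (Multiplicative.ofAdd 1)) *
        SemidirectProduct.inl (RAAG.gen (doubleStar G t) (Sum.inl w.1)) *
        (SemidirectProduct.inr (Multiplicative.ofAdd 1))⁻¹
        = SemidirectProduct.inl (RAAG.gen (doubleStar G t) (Sum.inr w)) := by
      rw [show ((SemidirectProduct.inr (φ := phiZ G t) (Multiplicative.ofAdd 1))⁻¹ :
          NSD G t) = SemidirectProduct.inr (Multiplicative.ofAdd (1:ℤ))⁻¹ from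
          (map_inv _ _).symm]
      rw [← SemidirectProduct.inl_aut, phiZ_one_apply, alpha_moves G t w.2]
    rw [key]
    rfl

end Aux

/-- **Corollary (doubling along a star).** For a finite graph `Γ` and a vertex `t`,
the right-angled Artin group on the double of `Γ` along the star of `t`
embeds into `A(Γ)`. -/
theorem raag_doubleStar_embeds {V : Type*} [Fintype V] (G : SimpleGraph V) (t : V) :
    ∃ f : RAAG (doubleStar G t) →* RAAG G, Function.Injective f := by
  refine ⟨fHom G t, ?_⟩
  have hcomp : Function.Injective (⇑(psiHom G t) ∘ ⇑(fHom G t)) := by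
    rw [← MonoidHom.coe_comp, psi_comp_f]
    exact theta_injective G t
  exact hcomp.of_comp
end

section
/- Let Γ be a finite simple graph. Then the chromatic number of the extension graph Γ^e equals the chromatic number of Γ. -/
open SimpleGraph

open Monoid PushoutI

namespace RaagProof

variable {ι : Type*} {G : ι → Type*} [∀ i, Group (G i)] {H : Type*} [Group H]
  (φ : ∀ i, H →* G i)

/-- product of a list of letters in the pushout -/
def prodL (L : List (Σ i, G i)) : PushoutI φ :=
  (L.map fun p => PushoutI.of (φ := φ) p.1 p.2).prod

@[simp] lemma prodL_nil : prodL φ ([] : List (Σ i, G i)) = 1 := rfl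

@[simp] lemma prodL_cons (p : Σ i, G i) (L : List (Σ i, G i)) :
    prodL φ (p :: L) = PushoutI.of (φ := φ) p.1 p.2 * prodL φ L := by
  simp [prodL]

lemma prodL_append (L M : List (Σ i, G i)) :
    prodL φ (L ++ M) = prodL φ L * prodL φ M := by
  simp [prodL]

lemma prodL_revinv (L : List (Σ i, G i)) :
    prodL φ ((L.map fun p => ⟨p.1, p.2⁻¹⟩).reverse) = (prodL φ L)⁻¹ := by
  induction L with
  | nil => simp
  | cons p L ih => simp [prodL_append, ih, prodL_cons, mul_comm]

/-- A list of letters is `OkL` if adjacent letters lie in different factors and no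
letter is in the image of the base group. -/
def OkL (L : List (Σ i, G i)) : Prop :=
  L.Chain' (fun p q => p.1 ≠ q.1) ∧ ∀ p ∈ L, p.2 ∉ (φ p.1).range

variable (hφ : ∀ i, Function.Injective (φ i))

/-- An `OkL` list gives a reduced word. -/
lemma okl_word {L : List (Σ i, G i)} (h : OkL φ L) :
    ∃ w : CoprodI.Word G, w.toList = L ∧ PushoutI.Reduced φ w ∧
      ofCoprodI (φ := φ) w.prod = prodL φ L := by
  refine ⟨⟨L, fun l hl hl1 => h.2 l hl ⟨1, by rw [map_one, hl1]⟩, h.1⟩, rfl, ?_, ?_⟩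
  · intro g hg
    exact h.2 g hg
  · show ofCoprodI (φ := φ) (List.prod (L.map fun l => CoprodI.of l.snd)) = _
    rw [map_list_prod, List.map_map, prodL]
    congr 1

include hφ in
lemma okl_not_base {L : List (Σ i, G i)} (h : OkL φ L) (hne : L ≠ []) :
    prodL φ L ∉ (PushoutI.base φ).range := by
  obtain ⟨w, hwl, hred, hprod⟩ := okl_word φ h
  intro hmem
  have := hred.eq_empty_of_mem_range hφ (hprod ▸ hmem)
  rw [CoprodI.Word.ext_iff] at this
  exact hne (by rw [← hwl]; simpa using this)

include hφ in
/-- An `OkL` list of length at least two has product not in the image of any factor. -/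
lemma okl_not_of {L : List (Σ i, G i)} (h : OkL φ L) (hlen : 2 ≤ L.length)
    {i : ι} {x : G i} : prodL φ L ≠ PushoutI.of (φ := φ) i x := by
  intro heq
  match L, hlen with
  | ⟨j, z⟩ :: q :: M, _ =>
  have hM : OkL φ (q :: M) := ⟨h.1.tail, fun p hp => h.2 p (List.mem_cons_of_mem _ hp)⟩
  by_cases hx : x ∈ (φ i).range
  · obtain ⟨c, rfl⟩ := hx
    exact okl_not_base φ hφ h (by simp) (heq ▸ ⟨c, (of_apply_eq_base φ i c).symm⟩)
  by_cases hij : i = j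
  · subst hij
    have h1 : PushoutI.of (φ := φ) i z * prodL φ (q :: M) = PushoutI.of (φ := φ) i x := by
      simpa using heq
    -- merge x⁻¹ with head
    by_cases hy : x⁻¹ * z ∈ (φ i).range
    · obtain ⟨c, hc⟩ := hy
      have h3 : PushoutI.of (φ := φ) i (x⁻¹ * z) * prodL φ (q :: M) = 1 := by
        rw [map_mul, map_inv, mul_assoc, h1, inv_mul_cancel]
      have h4 : (prodL φ (q :: M))⁻¹ = PushoutI.base φ c := by
        rw [inv_eq_of_mul_eq_one_left h3, ← hc, of_apply_eq_base]
      have h5 : prodL φ (q :: M) = PushoutI.base φ c⁻¹ := by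
        rw [map_inv, ← h4, inv_inv]
      exact okl_not_base φ hφ hM (by simp) (h5 ▸ ⟨c⁻¹, rfl⟩)
    · -- new list ⟨i, x⁻¹ * z⟩ :: q :: M has product 1
      have hok : OkL φ (⟨i, x⁻¹ * z⟩ :: q :: M) := by
        refine ⟨List.isChain_cons_cons.2 ⟨?_, hM.1⟩, ?_⟩
        · exact (List.isChain_cons_cons.1 h.1).1
        · rintro p hp
          rcases List.mem_cons.1 hp with rfl | hp
          · exact hy
          · exact hM.2 p hp
      have hone : prodL φ (⟨i, x⁻¹ * z⟩ :: q :: M) = 1 := by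
        rw [prodL_cons]
        show PushoutI.of (φ := φ) i (x⁻¹ * z) * prodL φ (q :: M) = 1
        rw [map_mul, map_inv, mul_assoc, h1, inv_mul_cancel]
      exact okl_not_base φ hφ hok (by simp) (hone ▸ ⟨1, by simp⟩)
  · -- prepend ⟨i, x⁻¹⟩
    have hok : OkL φ (⟨i, x⁻¹⟩ :: ⟨j, z⟩ :: q :: M) := by
      refine ⟨List.isChain_cons_cons.2 ⟨hij, h.1⟩, ?_⟩
      rintro p hp
      rcases List.mem_cons.1 hp with rfl | hp
      · exact fun ⟨c, hc⟩ => hx ⟨c⁻¹, by rw [map_inv, hc, inv_inv]⟩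
      · exact h.2 p hp
    have hone : prodL φ (⟨i, x⁻¹⟩ :: ⟨j, z⟩ :: q :: M) = 1 := by
      rw [prodL_cons]
      show PushoutI.of (φ := φ) i x⁻¹ * prodL φ (⟨j, z⟩ :: q :: M) = 1
      rw [heq, map_inv, inv_mul_cancel]
    exact okl_not_base φ hφ hok (by simp) (hone ▸ ⟨1, by simp⟩)



namespace Central

variable (i₀ : ι)

/-- Last letter (if any) is not in factor `i₀`. -/
def LastNe (L : List (Σ i, G i)) : Prop := ∀ p ∈ L.getLast?, p.1 ≠ i₀

omit [∀ i, Group (G i)] in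
lemma lastNe_nil : LastNe (G := G) i₀ [] := by simp [LastNe]

omit [∀ i, Group (G i)] in
lemma lastNe_replace {j : ι} {z w : G j} {M : List (Σ i, G i)}
    (h : LastNe i₀ (⟨j, z⟩ :: M)) : LastNe i₀ (⟨j, w⟩ :: M) := by
  cases M with
  | nil =>
    intro p hp
    simp only [List.getLast?_singleton, Option.mem_some_iff] at hp
    subst hp
    simpa [LastNe] using h
  | cons q M' =>
    intro p hp
    rw [List.getLast?_cons_cons] at hp
    exact h p (by rw [List.getLast?_cons_cons]; exact hp)

omit [∀ i, Group (G i)] in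
lemma lastNe_cons {p : Σ i, G i} {q : Σ i, G i} {M : List (Σ i, G i)}
    (h : LastNe i₀ (q :: M)) : LastNe i₀ (p :: q :: M) := by
  intro r hr; rw [List.getLast?_cons_cons] at hr; exact h r hr

omit [∀ i, Group (G i)] in
lemma lastNe_tail {p q : Σ i, G i} {M : List (Σ i, G i)}
    (h : LastNe i₀ (p :: q :: M)) : LastNe i₀ (q :: M) := by
  intro r hr; exact h r (by rw [List.getLast?_cons_cons]; exact hr)

/-- push a base element across one letter -/
lemma base_push (i k : ι) (c : H) (w : G k) :
    PushoutI.of (φ := φ) i (φ i c) * PushoutI.of (φ := φ) k w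
      = PushoutI.of (φ := φ) k (φ k c * w) := by
  rw [of_apply_eq_base, map_mul, ← of_apply_eq_base φ k]

/-- The invariant: a normal-form-like decomposition. -/
def InvP (g : PushoutI φ) : Prop :=
  ∃ (L : List (Σ i, G i)) (u : G i₀),
    OkL φ L ∧ LastNe i₀ L ∧ g = prodL φ L * PushoutI.of (φ := φ) i₀ u

lemma invP_one : InvP φ i₀ (1 : PushoutI φ) :=
  ⟨[], 1, ⟨List.isChain_nil, by simp⟩, lastNe_nil i₀, by simp⟩

lemma invP_step {i : ι} (x : G i) {g : PushoutI φ} (hg : InvP φ i₀ g) :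
    InvP φ i₀ (PushoutI.of (φ := φ) i x * g) := by
  classical
  obtain ⟨L, u, hok, hlast, rfl⟩ := hg
  by_cases hx : x ∈ (φ i).range
  · obtain ⟨c, rfl⟩ := hx
    cases L with
    | nil =>
      refine ⟨[], φ i₀ c * u, ⟨List.isChain_nil, by simp⟩, lastNe_nil i₀, ?_⟩
      simp only [prodL_nil, one_mul, mul_one]
      exact base_push φ i i₀ c u
    | cons p M =>
      obtain ⟨j, z⟩ := p
      refine ⟨⟨j, φ j c * z⟩ :: M, u, ⟨?_, ?_⟩, lastNe_replace i₀ hlast, ?_⟩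
      · exact List.isChain_cons.2 ⟨(List.isChain_cons.1 hok.1).1, (List.isChain_cons.1 hok.1).2⟩
      · rintro p hp
        rcases List.mem_cons.1 hp with rfl | hp
        · rintro ⟨d, hd⟩
          exact hok.2 ⟨j, z⟩ (List.mem_cons_self)
            ⟨c⁻¹ * d, by rw [map_mul, hd, map_inv, inv_mul_cancel_left]⟩
        · exact hok.2 p (List.mem_cons_of_mem _ hp)
      · simp only [prodL_cons, ← base_push φ i j c z, mul_assoc]
  · cases L with
    | nil =>
      by_cases hi : i = i₀
      · subst hi
        exact ⟨[], x * u, ⟨List.isChain_nil, by simp⟩, lastNe_nil _, by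
          simp only [prodL_nil, one_mul, map_mul]⟩
      · refine ⟨[⟨i, x⟩], u, ⟨List.isChain_singleton _, ?_⟩, ?_, ?_⟩
        · intro p hp; rcases List.mem_singleton.1 hp with rfl; exact hx
        · intro p hp
          simp only [List.getLast?_singleton, Option.mem_some_iff] at hp
          subst hp; exact hi
        · simp only [prodL_cons, prodL_nil, mul_one, one_mul, mul_assoc]
    | cons p M =>
      obtain ⟨j, z⟩ := p
      by_cases hij : i = j
      · subst hij
        by_cases hy : x * z ∈ (φ i).range
        · obtain ⟨c, hc⟩ := hy
          cases M with
          | nil =>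
            refine ⟨[], φ i₀ c * u, ⟨List.isChain_nil, by simp⟩, lastNe_nil i₀, ?_⟩
            simp only [prodL_cons, prodL_nil, mul_one, one_mul, ← mul_assoc]
            rw [← map_mul, ← hc, base_push]
          | cons q M' =>
            obtain ⟨k, w⟩ := q
            refine ⟨⟨k, φ k c * w⟩ :: M', u, ⟨?_, ?_⟩,
              lastNe_replace i₀ (lastNe_tail i₀ hlast), ?_⟩
            · exact List.isChain_cons.2 ⟨(List.isChain_cons.1 (hok.1.tail)).1,
                (List.isChain_cons.1 (hok.1.tail)).2⟩
            · rintro p hp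
              rcases List.mem_cons.1 hp with rfl | hp
              · rintro ⟨d, hd⟩
                exact hok.2 ⟨k, w⟩ (List.mem_cons_of_mem _ (List.mem_cons_self))
                  ⟨c⁻¹ * d, by rw [map_mul, hd, map_inv, inv_mul_cancel_left]⟩
              · exact hok.2 p (List.mem_cons_of_mem _ (List.mem_cons_of_mem _ hp))
            · simp only [prodL_cons, ← mul_assoc]
              rw [← map_mul, ← hc, base_push]
        · refine ⟨⟨i, x * z⟩ :: M, u, ⟨?_, ?_⟩, lastNe_replace i₀ hlast, ?_⟩
          · exact List.isChain_cons.2 ⟨(List.isChain_cons.1 hok.1).1, (List.isChain_cons.1 hok.1).2⟩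
          · rintro p hp
            rcases List.mem_cons.1 hp with rfl | hp
            · exact hy
            · exact hok.2 p (List.mem_cons_of_mem _ hp)
          · simp only [prodL_cons, ← mul_assoc]
            rw [← map_mul]
      · refine ⟨⟨i, x⟩ :: ⟨j, z⟩ :: M, u, ⟨List.isChain_cons_cons.2 ⟨hij, hok.1⟩, ?_⟩,
          lastNe_cons i₀ hlast, ?_⟩
        · rintro p hp
          rcases List.mem_cons.1 hp with rfl | hp
          · exact hx
          · exact hok.2 p hp
        · simp only [prodL_cons, mul_assoc]

lemma invP_all (g : PushoutI φ) : InvP φ i₀ g := by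
  have H : ∀ g : PushoutI φ, ∀ h, InvP φ i₀ h → InvP φ i₀ (g * h) := by
    intro g
    induction g using PushoutI.induction_on with
    | of i x => exact fun h hh => invP_step φ i₀ x hh
    | base c =>
      intro h hh
      rw [← of_apply_eq_base φ i₀ c]
      exact invP_step φ i₀ (φ i₀ c) hh
    | mul x y hx hy =>
      intro h hh
      rw [mul_assoc]
      exact hx _ (hy _ hh)
  simpa using H g 1 (invP_one φ i₀)

include hφ in
/-- **Key amalgam lemma**: if `a ∈ G i₀` is central in its factor and not in the image of the
base group, then anything commuting with `of i₀ a` lies in the image of `G i₀`. -/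
theorem commute_mem_of_range {a : G i₀} (ha : a ∉ (φ i₀).range)
    (hcen : ∀ y : G i₀, Commute a y) {g : PushoutI φ}
    (hcomm : Commute g (PushoutI.of (φ := φ) i₀ a)) :
    g ∈ (PushoutI.of (φ := φ) i₀).range := by
  obtain ⟨L, u, hok, hlast, rfl⟩ := invP_all φ i₀ g
  by_cases hLnil : L = []
  · subst hLnil
    exact ⟨u, by simp⟩
  exfalso
  have hconj : (prodL φ L * PushoutI.of (φ := φ) i₀ u) * PushoutI.of (φ := φ) i₀ a *
      (prodL φ L * PushoutI.of (φ := φ) i₀ u)⁻¹ = PushoutI.of (φ := φ) i₀ a := by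
    rw [hcomm.eq, mul_inv_cancel_right]
  have huau : PushoutI.of (φ := φ) i₀ u * PushoutI.of (φ := φ) i₀ a *
      (PushoutI.of (φ := φ) i₀ u)⁻¹ = PushoutI.of (φ := φ) i₀ a := by
    rw [← map_mul, ← map_inv, ← map_mul]
    congr 1
    rw [← (hcen u).eq, mul_inv_cancel_right]
  have hprod : prodL φ L * PushoutI.of (φ := φ) i₀ a * (prodL φ L)⁻¹
      = PushoutI.of (φ := φ) i₀ a := by
    calc prodL φ L * PushoutI.of (φ := φ) i₀ a * (prodL φ L)⁻¹
        = prodL φ L * (PushoutI.of (φ := φ) i₀ u * PushoutI.of (φ := φ) i₀ a *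
            (PushoutI.of (φ := φ) i₀ u)⁻¹) * (prodL φ L)⁻¹ := by rw [huau]
      _ = (prodL φ L * PushoutI.of (φ := φ) i₀ u) * PushoutI.of (φ := φ) i₀ a *
            (prodL φ L * PushoutI.of (φ := φ) i₀ u)⁻¹ := by group
      _ = PushoutI.of (φ := φ) i₀ a := hconj
  have hrevlet : ∀ q ∈ (L.map fun p : (Σ i, G i) => (⟨p.1, p.2⁻¹⟩ : Σ i, G i)).reverse,
      q.2 ∉ (φ q.1).range := by
    intro q hq
    rw [List.mem_reverse, List.mem_map] at hq
    obtain ⟨r, hr, rfl⟩ := hq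
    rintro ⟨d, hd⟩
    exact hok.2 r hr ⟨d⁻¹, by rw [map_inv, hd, inv_inv]⟩
  have hrevchain : ((L.map fun p : (Σ i, G i) => (⟨p.1, p.2⁻¹⟩ : Σ i, G i)).reverse).Chain'
      (fun p q => p.1 ≠ q.1) := by
    show List.IsChain _ _; rw [List.isChain_reverse, List.isChain_map]
    exact hok.1.imp fun {a b} h => Ne.symm h
  have hrevhead : ∀ q ∈ ((L.map fun p : (Σ i, G i) =>
      (⟨p.1, p.2⁻¹⟩ : Σ i, G i)).reverse).head?, i₀ ≠ q.1 := by
    intro q hq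
    rw [List.head?_reverse, List.getLast?_map, Option.mem_def, Option.map_eq_some_iff] at hq
    obtain ⟨r, hr, rfl⟩ := hq
    exact (hlast r hr).symm
  have hWok : OkL φ (L ++ ⟨i₀, a⟩ :: ((L.map fun p : (Σ i, G i) =>
      (⟨p.1, p.2⁻¹⟩ : Σ i, G i)).reverse)) := by
    constructor
    · show List.IsChain _ _; rw [List.isChain_append]
      refine ⟨hok.1, List.isChain_cons.2 ⟨hrevhead, hrevchain⟩, ?_⟩
      intro x hx y hy
      simp only [List.head?_cons, Option.mem_some_iff] at hy
      subst hy
      exact hlast x hx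
    · intro q hq
      rw [List.mem_append, List.mem_cons] at hq
      rcases hq with hq | rfl | hq
      · exact hok.2 q hq
      · exact ha
      · exact hrevlet q hq
  have hWlen : 2 ≤ (L ++ ⟨i₀, a⟩ :: ((L.map fun p : (Σ i, G i) =>
      (⟨p.1, p.2⁻¹⟩ : Σ i, G i)).reverse)).length := by
    have := List.length_pos_iff.2 hLnil
    simp only [List.length_append, List.length_cons, List.length_reverse, List.length_map]
    omega
  have hWprod : prodL φ (L ++ ⟨i₀, a⟩ :: ((L.map fun p : (Σ i, G i) =>
      (⟨p.1, p.2⁻¹⟩ : Σ i, G i)).reverse)) = PushoutI.of (φ := φ) i₀ a := by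
    rw [prodL_append, prodL_cons, prodL_revinv, ← mul_assoc]
    exact hprod
  exact okl_not_of φ hφ hWok hWlen hWprod

end Central
end RaagProof


namespace RaagProof

variable {V : Type*} {G : SimpleGraph V}

lemma gen_commute {a b : V} (h : G.Adj a b) :
    Commute (RAAG.gen G a) (RAAG.gen G b) := by
  have hr : (FreeGroup.of a * FreeGroup.of b * (FreeGroup.of a)⁻¹ * (FreeGroup.of b)⁻¹)
      ∈ raagRels G := ⟨a, b, h, rfl⟩
  have h1 : PresentedGroup.mk (raagRels G)
      (FreeGroup.of a * FreeGroup.of b * (FreeGroup.of a)⁻¹ * (FreeGroup.of b)⁻¹) = 1 := by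
    apply (QuotientGroup.eq_one_iff _).2
    exact Subgroup.subset_normalClosure hr
  rw [map_mul, map_mul, map_inv, map_inv] at h1
  exact commutatorElement_eq_one_iff_commute.1 h1

/-- universal property of `RAAG` -/
def raagLift {K : Type*} [Group K] (f : V → K)
    (hf : ∀ a b, G.Adj a b → Commute (f a) (f b)) : RAAG G →* K :=
  PresentedGroup.toGroup (f := f) (by
    rintro r ⟨a, b, hab, rfl⟩
    simp only [map_mul, map_inv, FreeGroup.lift_apply_of]
    exact commutatorElement_eq_one_iff_commute.2 (hf a b hab))

@[simp] lemma raagLift_gen {K : Type*} [Group K] (f : V → K)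
    (hf : ∀ a b, G.Adj a b → Commute (f a) (f b)) (a : V) :
    raagLift f hf (RAAG.gen G a) = f a :=
  PresentedGroup.toGroup.of _

lemma raag_hom_ext {K : Type*} [Group K] {f g : RAAG G →* K}
    (h : ∀ a, f (RAAG.gen G a) = g (RAAG.gen G a)) : f = g :=
  PresentedGroup.ext h

open Classical in
/-- the exponent-sum (counting) homomorphism at a vertex -/
noncomputable def cnt (u : V) : RAAG G →* Multiplicative ℤ :=
  raagLift (fun a => if a = u then Multiplicative.ofAdd 1 else 1)
    (fun _ _ _ => Commute.all _ _)

open Classical in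
lemma cnt_gen (u a : V) :
    cnt (G := G) u (RAAG.gen G a) = if a = u then Multiplicative.ofAdd 1 else 1 := by
  simp [cnt]

lemma cnt_isConj {u : V} {x y : RAAG G} (h : IsConj x y) : cnt u y = cnt u x := by
  obtain ⟨c, hc⟩ := isConj_iff.1 h
  rw [← hc, map_mul, map_mul, map_inv, mul_comm, inv_mul_cancel_left]

open Classical in
lemma cnt_conj_gen {u w : V} {x : RAAG G} (h : IsConj (RAAG.gen G w) x) :
    cnt u x = if w = u then Multiplicative.ofAdd 1 else 1 := by
  rw [cnt_isConj h, cnt_gen]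

lemma conj_gen_unique {v w : V} {x : RAAG G} (hv : IsConj (RAAG.gen G v) x)
    (hw : IsConj (RAAG.gen G w) x) : v = w := by
  classical
  by_contra hne
  have h1 := cnt_conj_gen (u := v) hv
  have h2 := cnt_conj_gen (u := v) hw
  rw [if_pos rfl] at h1
  rw [if_neg (fun hh : w = v => hne hh.symm), h1] at h2
  have : (1 : ℤ) = 0 := Multiplicative.ofAdd.injective h2
  exact one_ne_zero this

lemma gen_injective {v w : V} (h : RAAG.gen G v = RAAG.gen G w) : v = w :=
  conj_gen_unique (x := RAAG.gen G w) (by rw [h]) (IsConj.refl _)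

/-- inclusion homomorphism between RAAGs of induced subgraphs -/
def mapRAAG {S T : Set V} (h : S ⊆ T) : RAAG (G.induce S) →* RAAG (G.induce T) :=
  raagLift (fun a => RAAG.gen _ ⟨a.1, h a.2⟩) (fun _ _ hab => gen_commute hab)

@[simp] lemma mapRAAG_gen {S T : Set V} (h : S ⊆ T) (a : S) :
    mapRAAG (G := G) h (RAAG.gen _ a) = RAAG.gen _ ⟨a.1, h a.2⟩ := by
  simp [mapRAAG]

/-- inclusion of the RAAG of an induced subgraph into the ambient RAAG -/
def inclRAAG (S : Set V) : RAAG (G.induce S) →* RAAG G :=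
  raagLift (fun a => RAAG.gen G a.1) (fun _ _ hab => gen_commute hab)

@[simp] lemma inclRAAG_gen (S : Set V) (a : S) :
    inclRAAG (G := G) S (RAAG.gen _ a) = RAAG.gen G a.1 := by
  simp [inclRAAG]

open Classical in
/-- retraction killing the generators outside `S`, from an induced subgraph on `T` -/
noncomputable def projRAAG' (S T : Set V) : RAAG (G.induce T) →* RAAG (G.induce S) :=
  raagLift (fun a => if h : a.1 ∈ S then RAAG.gen _ (⟨a.1, h⟩ : S) else 1)
    (fun a b hab => by
      by_cases ha : a.1 ∈ S <;> by_cases hb : b.1 ∈ S <;>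
        simp [ha, hb, Commute.one_left, Commute.one_right]
      exact gen_commute hab)

open Classical in
/-- retraction from the ambient RAAG -/
noncomputable def projRAAG (S : Set V) : RAAG G →* RAAG (G.induce S) :=
  raagLift (fun a => if h : a ∈ S then RAAG.gen _ (⟨a, h⟩ : S) else 1)
    (fun a b hab => by
      by_cases ha : a ∈ S <;> by_cases hb : b ∈ S <;>
        simp [ha, hb, Commute.one_left, Commute.one_right]
      exact gen_commute hab)

lemma projRAAG'_mapRAAG {S T : Set V} (h : S ⊆ T) :
    (projRAAG' (G := G) S T).comp (mapRAAG h) = MonoidHom.id _ := by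
  apply raag_hom_ext
  intro a
  simp only [MonoidHom.comp_apply, mapRAAG_gen, MonoidHom.id_apply]
  rw [projRAAG', raagLift_gen, dif_pos a.2]

lemma mapRAAG_injective {S T : Set V} (h : S ⊆ T) :
    Function.Injective (mapRAAG (G := G) h) := by
  have hli : Function.LeftInverse (projRAAG' (G := G) S T) (mapRAAG h) := fun x => by
    rw [← MonoidHom.comp_apply, projRAAG'_mapRAAG, MonoidHom.id_apply]
  exact hli.injective

end RaagProof


namespace RaagProof

section Star

variable {V : Type*}

/-- star of `v` -/
abbrev stS (G : SimpleGraph V) (v : V) : Set V := insert v {u | G.Adj v u}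
/-- link of `v` -/
abbrev lkS (G : SimpleGraph V) (v : V) : Set V := {u | G.Adj v u}
/-- complement of `v` -/
abbrev restS (G : SimpleGraph V) (v : V) : Set V := {u | u ≠ v}

variable (G : SimpleGraph V) (v : V)

lemma lk_subset_st : lkS G v ⊆ stS G v := Set.subset_insert _ _
lemma lk_subset_rest : lkS G v ⊆ restS G v := fun u hu => SimpleGraph.Adj.ne' (hu : G.Adj v u)
lemma v_mem_st : v ∈ stS G v := Set.mem_insert _ _

/-- the two factors of the amalgam decomposition of `RAAG G` along the star of `v` -/
def Gf : Bool → Type _ := fun b =>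
  Bool.rec (RAAG (G.induce (restS G v))) (RAAG (G.induce (stS G v))) b

instance : ∀ b, Group (Gf G v b) := fun b =>
  Bool.rec (inferInstanceAs (Group (RAAG (G.induce (restS G v)))))
    (inferInstanceAs (Group (RAAG (G.induce (stS G v))))) b

/-- the base maps of the amalgam -/
def φf : ∀ b, RAAG (G.induce (lkS G v)) →* Gf G v b := fun b =>
  Bool.rec (mapRAAG (lk_subset_rest G v)) (mapRAAG (lk_subset_st G v)) b

lemma φf_injective : ∀ b, Function.Injective (φf G v b) := fun b => by
  cases b
  · exact mapRAAG_injective (lk_subset_rest G v)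
  · exact mapRAAG_injective (lk_subset_st G v)

/-- the distinguished central generator of the star factor -/
def aSt : Gf G v true := RAAG.gen (G.induce (stS G v)) ⟨v, v_mem_st G v⟩

lemma aSt_central (y : Gf G v true) : Commute (aSt G v) y := by
  have hmem : y ∈ Subgroup.centralizer {aSt G v} := by
    apply PresentedGroup.generated_by
    intro u
    apply Subgroup.mem_centralizer_iff.2
    rintro h hh
    rcases Set.mem_singleton_iff.1 hh with rfl
    rcases Set.mem_insert_iff.1 u.2 with h1 | h1
    · have huv : (⟨v, v_mem_st G v⟩ : stS G v) = u := Subtype.ext h1.symm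
      rw [show (PresentedGroup.of u : RAAG (G.induce (stS G v))) = RAAG.gen _ u from rfl, ← huv]
      rfl
    · exact (gen_commute (by exact h1 : (G.induce (stS G v)).Adj ⟨v, v_mem_st G v⟩ u)).eq
  exact ((Subgroup.mem_centralizer_iff.1 hmem (aSt G v) rfl :
    aSt G v * y = y * aSt G v) : Commute (aSt G v) y)

lemma aSt_not_range : aSt G v ∉ (φf G v true).range := by
  classical
  rintro ⟨h, hh⟩
  have hcomp : (cnt (⟨v, v_mem_st G v⟩ : stS G v)).comp (φf G v true) = 1 := by
    apply raag_hom_ext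
    intro a
    show cnt (G := G.induce (stS G v)) _ (mapRAAG (G := G) (lk_subset_st G v) (RAAG.gen _ a)) = 1
    have hne : (⟨a.1, lk_subset_st G v a.2⟩ : stS G v) ≠ ⟨v, v_mem_st G v⟩ := fun hq =>
      (G.ne_of_adj a.2).symm (congrArg Subtype.val hq)
    rw [mapRAAG_gen, cnt_gen, if_neg hne]
  have h1 : cnt (⟨v, v_mem_st G v⟩ : stS G v) (aSt G v) = 1 := by
    rw [← hh]
    have := congrArg (fun f => f h) (congrArg DFunLike.coe hcomp)
    exact this
  rw [aSt, cnt_gen, if_pos rfl] at h1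
  exact one_ne_zero (Multiplicative.ofAdd.injective h1)

open Classical in
/-- the map from `RAAG G` to the pushout -/
noncomputable def theta : RAAG G →* Monoid.PushoutI (φf G v) :=
  raagLift
    (fun u => if h : u = v then Monoid.PushoutI.of (φ := φf G v) true (aSt G v)
      else Monoid.PushoutI.of (φ := φf G v) false (RAAG.gen _ (⟨u, h⟩ : restS G v)) )
    (by
      have key : ∀ (b : V) (hb : ¬ b = v), G.Adj v b →
          Commute (Monoid.PushoutI.of (φ := φf G v) true (aSt G v))
            (Monoid.PushoutI.of (φ := φf G v) false
              (RAAG.gen _ (⟨b, hb⟩ : restS G v))) := by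
        intro b hb hvb
        have hblk : b ∈ lkS G v := hvb
        have e1 : (RAAG.gen _ (⟨b, hb⟩ : restS G v))
            = φf G v false (RAAG.gen _ (⟨b, hblk⟩ : lkS G v)) := by
          show _ = mapRAAG (lk_subset_rest G v) (RAAG.gen _ (⟨b, hblk⟩ : lkS G v))
          rw [mapRAAG_gen]
        have e2 : φf G v true (RAAG.gen _ (⟨b, hblk⟩ : lkS G v))
            = RAAG.gen _ (⟨b, lk_subset_st G v hblk⟩ : stS G v) := by
          show mapRAAG (lk_subset_st G v) _ = _
          rw [mapRAAG_gen]
        rw [e1, Monoid.PushoutI.of_apply_eq_base,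
          ← Monoid.PushoutI.of_apply_eq_base (φf G v) true, e2]
        exact Commute.map
          (gen_commute (by exact hvb :
            (G.induce (stS G v)).Adj ⟨v, v_mem_st G v⟩ ⟨b, lk_subset_st G v hblk⟩))
          (Monoid.PushoutI.of (φ := φf G v) true)
      intro a b hab
      by_cases ha : a = v
      · have hb : ¬ b = v := fun h => G.irrefl (ha ▸ h ▸ hab)
        simp only [dif_pos ha, dif_neg hb]
        exact key b hb (ha ▸ hab)
      · by_cases hb : b = v
        · simp only [dif_neg ha, dif_pos hb]
          exact (key a ha (hb ▸ hab.symm)).symm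
        · simp only [dif_neg ha, dif_neg hb]
          exact Commute.map
            (gen_commute (by exact hab :
              (G.induce (restS G v)).Adj ⟨a, ha⟩ ⟨b, hb⟩))
            (Monoid.PushoutI.of (φ := φf G v) false))

lemma theta_gen_v : theta G v (RAAG.gen G v)
    = Monoid.PushoutI.of (φ := φf G v) true (aSt G v) := by
  classical
  rw [theta, raagLift_gen, dif_pos rfl]

lemma theta_gen_ne {u : V} (h : ¬ u = v) : theta G v (RAAG.gen G u)
    = Monoid.PushoutI.of (φ := φf G v) false (RAAG.gen _ (⟨u, h⟩ : restS G v)) := by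
  classical
  rw [theta, raagLift_gen, dif_neg h]

/-- the map back from the pushout to `RAAG G` -/
noncomputable def lambda : Monoid.PushoutI (φf G v) →* RAAG G :=
  Monoid.PushoutI.lift
    (fun b => Bool.rec (inclRAAG (restS G v)) (inclRAAG (stS G v)) b)
    (inclRAAG (lkS G v))
    (by
      intro b
      cases b
      · apply raag_hom_ext
        intro a
        show inclRAAG _ (mapRAAG (lk_subset_rest G v) (RAAG.gen _ a)) = _
        rw [mapRAAG_gen, inclRAAG_gen, inclRAAG_gen]
      · apply raag_hom_ext
        intro a
        show inclRAAG _ (mapRAAG (lk_subset_st G v) (RAAG.gen _ a)) = _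
        rw [mapRAAG_gen, inclRAAG_gen, inclRAAG_gen])

lemma lambda_of_true (y : Gf G v true) :
    lambda G v (Monoid.PushoutI.of (φ := φf G v) true y) = inclRAAG (stS G v) y := by
  rw [lambda, Monoid.PushoutI.lift_of]
  rfl

lemma lambda_of_false (y : Gf G v false) :
    lambda G v (Monoid.PushoutI.of (φ := φf G v) false y) = inclRAAG (restS G v) y := by
  rw [lambda, Monoid.PushoutI.lift_of]
  rfl

lemma lambda_theta : (lambda G v).comp (theta G v) = MonoidHom.id _ := by
  apply raag_hom_ext
  intro a
  rw [MonoidHom.comp_apply, MonoidHom.id_apply]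
  by_cases ha : a = v
  · subst ha
    rw [theta_gen_v, lambda_of_true]
    show inclRAAG (stS G a) (RAAG.gen _ _) = _
    rw [inclRAAG_gen]
  · rw [theta_gen_ne G v ha]; exact (lambda_of_false G v _).trans (inclRAAG_gen _ _)

/-- **Centralizer theorem (generator version)**: anything commuting with `gen v`
lies in the image of the subgroup generated by the star of `v`. -/
theorem commute_gen_mem_star {x : RAAG G} (hx : Commute x (RAAG.gen G v)) :
    ∃ y : RAAG (G.induce (stS G v)), x = inclRAAG (stS G v) y := by
  have hth : Commute (theta G v x) (Monoid.PushoutI.of (φ := φf G v) true (aSt G v)) := by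
    rw [← theta_gen_v]
    exact hx.map (theta G v)
  obtain ⟨y, hy⟩ := Central.commute_mem_of_range (φf G v) (φf_injective G v) true
    (aSt_not_range G v) (aSt_central G v) hth
  refine ⟨y, ?_⟩
  have := congrArg (lambda G v) hy
  rw [lambda_of_true] at this
  rw [this, ← MonoidHom.comp_apply, lambda_theta, MonoidHom.id_apply]


/-- every element of the star group decomposes as `a^n * (link part)` -/
lemma st_decomp (y : RAAG (G.induce (stS G v))) :
    ∃ (n : ℤ) (ℓ : RAAG (G.induce (lkS G v))),
      y = (RAAG.gen (G.induce (stS G v)) ⟨v, v_mem_st G v⟩) ^ n * mapRAAG (lk_subset_st G v) ℓ := by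
  let S : Subgroup (RAAG (G.induce (stS G v))) :=
    { carrier := {y | ∃ (n : ℤ) (ℓ : RAAG (G.induce (lkS G v))),
        y = (RAAG.gen (G.induce (stS G v)) ⟨v, v_mem_st G v⟩) ^ n * mapRAAG (lk_subset_st G v) ℓ}
      one_mem' := ⟨0, 1, by simp⟩
      mul_mem' := by
        rintro x y ⟨n, ℓ, rfl⟩ ⟨m, ℓ', rfl⟩
        refine ⟨n + m, ℓ * ℓ', ?_⟩
        have hswap : mapRAAG (lk_subset_st G v) ℓ * (RAAG.gen (G.induce (stS G v)) ⟨v, v_mem_st G v⟩) ^ m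
            = (RAAG.gen (G.induce (stS G v)) ⟨v, v_mem_st G v⟩) ^ m * mapRAAG (lk_subset_st G v) ℓ :=
          (((aSt_central G v (mapRAAG (lk_subset_st G v) ℓ) :
            Commute (RAAG.gen (G.induce (stS G v)) ⟨v, v_mem_st G v⟩)
              (mapRAAG (lk_subset_st G v) ℓ))).zpow_left m).eq.symm
        calc (RAAG.gen (G.induce (stS G v)) ⟨v, v_mem_st G v⟩) ^ n * mapRAAG (lk_subset_st G v) ℓ *
              ((RAAG.gen (G.induce (stS G v)) ⟨v, v_mem_st G v⟩) ^ m * mapRAAG (lk_subset_st G v) ℓ')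
            = (RAAG.gen (G.induce (stS G v)) ⟨v, v_mem_st G v⟩) ^ n * (mapRAAG (lk_subset_st G v) ℓ * (RAAG.gen (G.induce (stS G v)) ⟨v, v_mem_st G v⟩) ^ m) *
              mapRAAG (lk_subset_st G v) ℓ' := by group
          _ = (RAAG.gen (G.induce (stS G v)) ⟨v, v_mem_st G v⟩) ^ n * ((RAAG.gen (G.induce (stS G v)) ⟨v, v_mem_st G v⟩) ^ m * mapRAAG (lk_subset_st G v) ℓ) *
              mapRAAG (lk_subset_st G v) ℓ' := by rw [hswap]
          _ = ((RAAG.gen (G.induce (stS G v)) ⟨v, v_mem_st G v⟩) ^ n * (RAAG.gen (G.induce (stS G v)) ⟨v, v_mem_st G v⟩) ^ m) *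
              (mapRAAG (lk_subset_st G v) ℓ * mapRAAG (lk_subset_st G v) ℓ') := by group
          _ = (RAAG.gen (G.induce (stS G v)) ⟨v, v_mem_st G v⟩) ^ (n + m) * mapRAAG (lk_subset_st G v) (ℓ * ℓ') := by
              rw [zpow_add, map_mul]
      inv_mem' := by
        rintro x ⟨n, ℓ, rfl⟩
        refine ⟨-n, ℓ⁻¹, ?_⟩
        have hswap : mapRAAG (lk_subset_st G v) ℓ⁻¹ * (RAAG.gen (G.induce (stS G v)) ⟨v, v_mem_st G v⟩) ^ (-n)
            = (RAAG.gen (G.induce (stS G v)) ⟨v, v_mem_st G v⟩) ^ (-n) * mapRAAG (lk_subset_st G v) ℓ⁻¹ :=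
          (((aSt_central G v (mapRAAG (lk_subset_st G v) ℓ⁻¹) :
            Commute (RAAG.gen (G.induce (stS G v)) ⟨v, v_mem_st G v⟩)
              (mapRAAG (lk_subset_st G v) ℓ⁻¹))).zpow_left (-n)).eq.symm
        rw [mul_inv_rev, ← zpow_neg, ← map_inv, hswap] }
  have hy : y ∈ S := by
    apply PresentedGroup.generated_by
    intro u
    rcases Set.mem_insert_iff.1 u.2 with h1 | h1
    · exact ⟨1, 1, by
        rw [map_one, mul_one, zpow_one]
        exact congrArg _ (Subtype.ext h1)⟩
    · exact ⟨0, RAAG.gen _ (⟨u.1, h1⟩ : lkS G v), by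
        rw [zpow_zero, one_mul, mapRAAG_gen]
        exact congrArg (RAAG.gen _) (Subtype.ext rfl)⟩
  exact hy

lemma incl_comp_map : (inclRAAG (G := G) (stS G v)).comp (mapRAAG (lk_subset_st G v))
    = inclRAAG (lkS G v) := by
  apply raag_hom_ext
  intro a
  rw [MonoidHom.comp_apply, mapRAAG_gen, inclRAAG_gen, inclRAAG_gen]

open Classical in
lemma cnt_comp_incl_lk {u : V} (hu : u ∉ lkS G v) :
    (cnt u).comp (inclRAAG (G := G) (lkS G v)) = 1 := by
  apply raag_hom_ext
  intro a
  rw [MonoidHom.comp_apply, inclRAAG_gen, cnt_gen, if_neg (fun h : (a : V) = u => hu (h ▸ a.2))]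
  rfl

lemma proj_comp_incl_lk : (projRAAG (G := G) (lkS G v)).comp (inclRAAG (lkS G v))
    = MonoidHom.id _ := by
  classical
  apply raag_hom_ext
  intro a
  rw [MonoidHom.comp_apply, inclRAAG_gen, MonoidHom.id_apply, projRAAG, raagLift_gen,
    dif_pos a.2]

lemma proj_lk_gen_v : projRAAG (G := G) (lkS G v) (RAAG.gen G v) = 1 := by
  classical
  rw [projRAAG, raagLift_gen, dif_neg (fun h : v ∈ lkS G v => G.irrefl h)]

open Classical in
/-- **Key dichotomy**: two commuting conjugates of generators are either equal, or the
corresponding vertices are adjacent. -/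
theorem key_dichotomy {x y : RAAG G} {v w : V} (hx : IsConj (RAAG.gen G v) x)
    (hy : IsConj (RAAG.gen G w) y) (hxy : Commute x y) : x = y ∨ G.Adj v w := by
  obtain ⟨c, hc⟩ := isConj_iff.1 hx
  obtain ⟨d, hd⟩ := isConj_iff.1 hy
  set u : RAAG G := c⁻¹ * y * c with hu
  have hgv : RAAG.gen G v = c⁻¹ * x * c := by rw [← hc]; group
  have hcomm : Commute u (RAAG.gen G v) := by
    rw [hgv, hu]
    have h1 : Commute ((MulAut.conj c⁻¹) x) ((MulAut.conj c⁻¹) y) :=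
      hxy.map (MulAut.conj c⁻¹).toMonoidHom
    simp only [MulAut.conj_apply, inv_inv] at h1
    exact h1.symm
  have hcu : IsConj (RAAG.gen G w) u :=
    hy.trans (isConj_iff.mpr ⟨c⁻¹, by rw [hu]; group⟩)
  obtain ⟨z, hz⟩ := commute_gen_mem_star G v hcomm
  obtain ⟨n, ℓ, rfl⟩ := st_decomp G v z
  rw [map_mul, map_zpow] at hz
  have haux : inclRAAG (stS G v) (RAAG.gen (G.induce (stS G v)) ⟨v, v_mem_st G v⟩)
      = RAAG.gen G v := by rw [inclRAAG_gen]
  have hℓ' : inclRAAG (stS G v) (mapRAAG (lk_subset_st G v) ℓ)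
      = inclRAAG (lkS G v) ℓ := by
    rw [← MonoidHom.comp_apply, incl_comp_map]
  rw [haux, hℓ'] at hz
  -- hz : u = gen v ^ n * incl_lk ℓ
  have hcntv : cnt v u = Multiplicative.ofAdd n := by
    rw [hz, map_mul, map_zpow, cnt_gen, if_pos rfl]
    have : cnt v (inclRAAG (G := G) (lkS G v) ℓ) = 1 := by
      rw [← MonoidHom.comp_apply, cnt_comp_incl_lk G v (fun h => G.irrefl h)]
      rfl
    rw [this, mul_one]
    apply Multiplicative.toAdd.injective
    rw [toAdd_zpow]
    simp
  by_cases hvw : v = w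
  · subst hvw
    left
    have h1 : cnt v u = Multiplicative.ofAdd 1 := by
      rw [cnt_conj_gen hcu, if_pos rfl]
    have hn1 : n = 1 := by
      have := hcntv.symm.trans h1
      exact Multiplicative.ofAdd.injective this
    subst hn1
    rw [zpow_one] at hz
    -- now kill the link part
    have hproju : projRAAG (lkS G v) u = 1 := by
      have hud : u = (c⁻¹ * d) * RAAG.gen G v * (c⁻¹ * d)⁻¹ := by
        rw [hu, ← hd]; group
      rw [hud, map_mul, map_mul, map_inv, proj_lk_gen_v, mul_one, map_mul, mul_inv_rev]
      group
    have hprojℓ : projRAAG (lkS G v) u = ℓ := by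
      rw [hz, map_mul, proj_lk_gen_v, one_mul, ← MonoidHom.comp_apply, proj_comp_incl_lk,
        MonoidHom.id_apply]
    have hℓ1 : ℓ = 1 := by rw [← hprojℓ, hproju]
    rw [hℓ1, map_one, mul_one] at hz
    -- u = gen v, so y = c * gen v * c⁻¹ = x
    rw [← hc, ← hz, hu]
    group
  · right
    by_contra hadj
    have h1 : cnt v u = 1 := by
      rw [cnt_conj_gen hcu, if_neg (fun h => hvw h.symm)]
    have hn0 : n = 0 := by
      have h2 := hcntv.symm.trans h1
      have := congrArg Multiplicative.toAdd h2
      simpa using this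
    subst hn0
    rw [zpow_zero, one_mul] at hz
    have hwnotlk : w ∉ lkS G v := fun h => hadj h
    have h3 : cnt w u = 1 := by
      rw [hz, ← MonoidHom.comp_apply, cnt_comp_incl_lk G v hwnotlk]
      rfl
    have h4 : cnt w u = Multiplicative.ofAdd 1 := by
      rw [cnt_conj_gen hcu, if_pos rfl]
    have h5 := h3.symm.trans h4
    have := congrArg Multiplicative.toAdd h5
    simp at this

end Star
end RaagProof

namespace RaagProof

variable {V : Type*} {G : SimpleGraph V}

noncomputable def vertOf (x : extVertex G) : V := x.2.choose

lemma vertOf_spec (x : extVertex G) : IsConj (RAAG.gen G (vertOf x)) x.1 := x.2.choose_spec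

set_option maxHeartbeats 2000000 in
lemma ext_colorable_iff (n : ℕ) : (extGraph G).Colorable n ↔ G.Colorable n := by
  constructor
  · rintro ⟨c⟩
    refine ⟨SimpleGraph.Coloring.mk
      (fun v => c ⟨RAAG.gen G v, v, IsConj.refl _⟩) ?_⟩
    intro a b hab
    apply c.valid
    refine ⟨?_, gen_commute hab⟩
    intro h
    exact hab.ne (gen_injective (congrArg Subtype.val h))
  · rintro ⟨c⟩
    refine ⟨SimpleGraph.Coloring.mk (fun x => c (vertOf x)) ?_⟩
    rintro x y ⟨hne, hcomm⟩ hcc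
    rcases key_dichotomy G (vertOf_spec x) (vertOf_spec y) hcomm with h | h
    · exact hne (Subtype.ext h)
    · exact c.valid h hcc

theorem chromaticNumber_extGraph' (G : SimpleGraph V) :
    (extGraph G).chromaticNumber = G.chromaticNumber := by
  have hs : Set.ofPred (extGraph G).Colorable = Set.ofPred G.Colorable :=
    Set.ext fun n => ext_colorable_iff n
  rw [SimpleGraph.chromaticNumber, SimpleGraph.chromaticNumber, hs]

end RaagProof


/-- **Lemma (chromatic number).** The chromatic number of the extension graph `Γ^e`
equals that of the finite graph `Γ`. -/
theorem chromaticNumber_extGraph {V : Type*} [Fintype V] (G : SimpleGraph V) :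
    (extGraph G).chromaticNumber = G.chromaticNumber := by
  have hs : Set.ofPred (extGraph G).Colorable = Set.ofPred G.Colorable :=
    Set.ext fun n => RaagProof.ext_colorable_iff n
  rw [SimpleGraph.chromaticNumber, SimpleGraph.chromaticNumber, hs]
end

section
/- Let Γ be a finite simple graph, t a vertex of Γ, and Γ* the double of Γ along the star of t. If Γ* contains an induced cycle C_n for some n ≥ 6, then Γ contains an induced cycle C_m for some m with 5 ≤ m ≤ n. -/
open SimpleGraph
open Fin.NatCast

/- ### Auxiliary machinery -/

theorem dsAux_subval {n : ℕ} (u v : Fin n) :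
    (u - v).val = if v.val ≤ u.val then u.val - v.val else u.val + n - v.val := by
  have hu := u.isLt; have hv := v.isLt
  simp only [Fin.sub_def]
  rcases le_or_gt v.val u.val with h | h
  · rw [if_pos h, show n - v.val + u.val = n + (u.val - v.val) by omega, Nat.add_mod_left,
      Nat.mod_eq_of_lt (by omega)]
  · rw [if_neg (by omega), Nat.mod_eq_of_lt (by omega)]
    omega

theorem dsAux_addval {n : ℕ} [NeZero n] (i : Fin n) (e : ℕ) (he : e < n) :
    (i + (e : Fin n)).val = if i.val + e < n then i.val + e else i.val + e - n := by
  have hi := i.isLt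
  simp only [Fin.add_def, Fin.val_cast_of_lt he]
  rcases lt_or_ge (i.val + e) n with h | h
  · rw [if_pos h, Nat.mod_eq_of_lt h]
  · rw [if_neg (by omega), show i.val + e = n + (i.val + e - n) by omega, Nat.add_mod_left,
      Nat.mod_eq_of_lt (by omega)]
    omega

theorem dsAux_iadjgen {n : ℕ} [NeZero n] (hn : 6 ≤ n) (base : Fin n) (e1 e2 : ℕ)
    (h1 : e1 < n) (h2 : e2 < n) :
    (cycleGraph n).Adj (base + (e1 : Fin n)) (base + (e2 : Fin n)) ↔
      (e1 = e2 + 1 ∨ e2 = e1 + 1 ∨ (e1 = 0 ∧ e2 = n-1) ∨ (e2 = 0 ∧ e1 = n-1)) := by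
  have hb := base.isLt
  rw [cycleGraph_adj', dsAux_subval, dsAux_subval, dsAux_addval _ _ h1, dsAux_addval _ _ h2]
  split_ifs <;> omega

theorem dsAux_ieqgen {n : ℕ} [NeZero n] (base : Fin n) (e1 e2 : ℕ)
    (h1 : e1 < n) (h2 : e2 < n) :
    base + (e1 : Fin n) = base + (e2 : Fin n) ↔ e1 = e2 := by
  have hb := base.isLt
  rw [Fin.ext_iff, dsAux_addval _ _ h1, dsAux_addval _ _ h2]
  split_ifs <;> omega

section dsAux

variable {V : Type*} {G : SimpleGraph V} {t : V}

/-- Folding the double back onto `G`. -/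
def dsFold (G : SimpleGraph V) (t : V) : V ⊕ {v : V // v ∉ starSet G t} → V :=
  Sum.elim id Subtype.val

/-- A vertex of the double which lies in the first copy, inside the star. -/
def dsSpec (G : SimpleGraph V) (t : V) (w : V ⊕ {v : V // v ∉ starSet G t}) : Prop :=
  ∃ a, w = Sum.inl a ∧ a ∈ starSet G t

/-- A vertex of the double lying in the first copy. -/
def dsInl (G : SimpleGraph V) (t : V) (w : V ⊕ {v : V // v ∉ starSet G t}) : Prop :=
  ∃ a, w = Sum.inl a

theorem dsAux_not_star {x : V} (h : x ∉ starSet G t) : x ≠ t ∧ ¬G.Adj t x := by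
  simp only [starSet, Set.mem_insert_iff, SimpleGraph.mem_neighborSet] at h
  tauto

theorem dsAux_star_adj {x : V} (h : x ∈ starSet G t) (hx : x ≠ t) : G.Adj t x := by
  simp only [starSet, Set.mem_insert_iff, SimpleGraph.mem_neighborSet] at h
  tauto

theorem dsAux_adj_fold {w1 w2} (h : (doubleStar G t).Adj w1 w2) :
    G.Adj (dsFold G t w1) (dsFold G t w2) := by
  cases w1 <;> cases w2 <;> first | exact h | exact h.2

theorem dsAux_faith {w1 w2} (hcond : (dsInl G t w1 ↔ dsInl G t w2) ∨ dsSpec G t w1 ∨ dsSpec G t w2) :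
    (G.Adj (dsFold G t w1) (dsFold G t w2) ↔ (doubleStar G t).Adj w1 w2) ∧
      (w1 ≠ w2 → dsFold G t w1 ≠ dsFold G t w2) := by
  cases w1 with
  | inl a => cases w2 with
    | inl b =>
      refine ⟨Iff.rfl, fun hne heq => hne ?_⟩
      simpa [dsFold] using heq
    | inr x =>
      have haS : a ∈ starSet G t := by
        rcases hcond with hiff | hs | hs
        · exact absurd (hiff.mp ⟨a, rfl⟩) (by rintro ⟨b, hb⟩; cases hb)
        · obtain ⟨b, hb, hbS⟩ := hs; cases hb; exact hbS
        · obtain ⟨b, hb, _⟩ := hs; cases hb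
      constructor
      · constructor
        · intro hadj; exact ⟨haS, hadj⟩
        · intro hadj; exact hadj.2
      · intro _ heq
        simp only [dsFold, Sum.elim_inl, Sum.elim_inr] at heq
        exact x.2 (heq ▸ haS)
  | inr x => cases w2 with
    | inl b =>
      have hbS : b ∈ starSet G t := by
        rcases hcond with hiff | hs | hs
        · exact absurd (hiff.mpr ⟨b, rfl⟩) (by rintro ⟨c, hc⟩; cases hc)
        · obtain ⟨c, hc, _⟩ := hs; cases hc
        · obtain ⟨c, hc, hcS⟩ := hs; cases hc; exact hcS
      constructor
      · constructor
        · intro hadj; exact ⟨hbS, hadj⟩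
        · intro hadj; exact hadj.2
      · intro _ heq
        simp only [dsFold, Sum.elim_inl, Sum.elim_inr] at heq
        exact x.2 (heq.symm ▸ hbS)
    | inr y =>
      refine ⟨Iff.rfl, fun hne heq => hne ?_⟩
      simp only [dsFold, Sum.elim_inr] at heq
      exact congrArg Sum.inr (Subtype.ext heq)

theorem dsAux_nonspec_fold {w} (h : ¬ dsSpec G t w) : dsFold G t w ∉ starSet G t := by
  cases w with
  | inl a => exact fun hS => h ⟨a, rfl, hS⟩
  | inr x => exact x.2

theorem dsAux_spec_fold {w} (h : dsSpec G t w) : dsFold G t w ∈ starSet G t := by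
  obtain ⟨a, rfl, hS⟩ := h; exact hS

theorem dsAux_spec_adj_t {w1 w2} (h1 : dsSpec G t w1) (h2 : ¬ dsSpec G t w2)
    (hadj : (doubleStar G t).Adj w1 w2) : G.Adj t (dsFold G t w1) := by
  obtain ⟨a, rfl, haS⟩ := h1
  by_cases hat : a = t
  · subst hat
    exfalso
    cases w2 with
    | inl b =>
      have hb : G.Adj a b := hadj
      exact h2 ⟨b, rfl, Or.inr hb⟩
    | inr x => exact (dsAux_not_star x.2).2 hadj.2
  · exact dsAux_star_adj haS hat

theorem dsAux_cyc_consec {n : ℕ} [NeZero n] (hn : 6 ≤ n) (p : Fin n) :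
    (cycleGraph n).Adj p (p + 1) := by
  rw [cycleGraph_adj']
  right
  rw [add_sub_cancel_left, show (1 : Fin n) = ((1 : ℕ) : Fin n) by rw [Nat.cast_one],
    Fin.val_cast_of_lt (by omega)]

theorem dsAux_prop {n : ℕ} [NeZero n] (hn : 6 ≤ n) (f : cycleGraph n ↪g doubleStar G t)
    (i : Fin n) (e : ℕ)
    (hns : ∀ e', e' ≤ e → ¬ dsSpec G t (f (i + (e' : Fin n)))) :
    dsInl G t (f i) ↔ dsInl G t (f (i + (e : Fin n))) := by
  induction e with
  | zero => rw [Nat.cast_zero, add_zero]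
  | succ k ih =>
    have hk := ih (fun e' h => hns e' (le_trans h (Nat.le_succ k)))
    have hadj : (cycleGraph n).Adj (i + (k : Fin n)) (i + (k : Fin n) + 1) :=
      dsAux_cyc_consec hn _
    have hD : (doubleStar G t).Adj (f (i + (k : Fin n))) (f (i + (k : Fin n) + 1)) :=
      f.map_rel_iff.mpr hadj
    have hcast : (((k+1 : ℕ)) : Fin n) = (k : Fin n) + 1 := by push_cast; ring
    rw [hcast, ← add_assoc, hk]
    constructor
    · rintro ⟨a, ha⟩
      rcases hw : f (i + (k : Fin n) + 1) with b | x
      · exact ⟨b, rfl⟩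
      · exfalso
        rw [ha, hw] at hD
        exact hns k (Nat.le_succ k) ⟨a, ha, hD.1⟩
    · rintro ⟨b, hb⟩
      rcases hw : f (i + (k : Fin n)) with a | x
      · exact ⟨a, rfl⟩
      · exfalso
        rw [hb, hw] at hD
        refine hns (k+1) le_rfl ?_
        rw [hcast, ← add_assoc, hb]
        exact ⟨b, rfl, hD.1⟩

end dsAux

theorem dsAux_cycval {m : ℕ} (u v : Fin m) :
    (cycleGraph m).Adj u v ↔ (u.val = v.val + 1 ∨ v.val = u.val + 1 ∨
      (u.val = 0 ∧ v.val = m - 1 ∧ v.val ≠ 0) ∨ (v.val = 0 ∧ u.val = m - 1 ∧ u.val ≠ 0)) := by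
  have hu := u.isLt; have hv := v.isLt
  rw [cycleGraph_adj', dsAux_subval, dsAux_subval]
  split_ifs <;> omega

set_option maxHeartbeats 1600000 in
theorem dsAux_buildC5 {V : Type*} (G : SimpleGraph V) (v0 v1 v2 v3 v4 : V)
    (e01 : G.Adj v0 v1) (e12 : G.Adj v1 v2) (e23 : G.Adj v2 v3) (e34 : G.Adj v3 v4)
    (e40 : G.Adj v4 v0)
    (a02 : ¬G.Adj v0 v2) (a03 : ¬G.Adj v0 v3) (a13 : ¬G.Adj v1 v3) (a14 : ¬G.Adj v1 v4)
    (a24 : ¬G.Adj v2 v4)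
    (d02 : v0 ≠ v2) (d03 : v0 ≠ v3) (d13 : v1 ≠ v3) (d14 : v1 ≠ v4) (d24 : v2 ≠ v4) :
    Nonempty (cycleGraph 5 ↪g G) := by
  let c : Fin 5 → V := ![v0, v1, v2, v3, v4]
  have hc0 : c 0 = v0 := rfl
  have hc1 : c 1 = v1 := rfl
  have hc2 : c 2 = v2 := rfl
  have hc3 : c 3 = v3 := rfl
  have hc4 : c 4 = v4 := rfl
  refine ⟨⟨⟨c, ?_⟩, ?_⟩⟩
  · intro i j h
    fin_cases i <;> fin_cases j <;>
      simp only [hc0, hc1, hc2, hc3, hc4, Fin.mk_zero, Fin.mk_one] at h ⊢ <;>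
      first
        | rfl
        | exact absurd h e01.ne | exact absurd h e01.ne.symm
        | exact absurd h e12.ne | exact absurd h e12.ne.symm
        | exact absurd h e23.ne | exact absurd h e23.ne.symm
        | exact absurd h e34.ne | exact absurd h e34.ne.symm
        | exact absurd h e40.ne.symm | exact absurd h e40.ne
        | exact absurd h d02 | exact absurd h d02.symm
        | exact absurd h d03 | exact absurd h d03.symm
        | exact absurd h d13 | exact absurd h d13.symm
        | exact absurd h d14 | exact absurd h d14.symm
        | exact absurd h d24 | exact absurd h d24.symm
  · intro i j
    fin_cases i <;> fin_cases j <;>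
      first
        | exact iff_of_false (G.irrefl) (by decide)
        | exact iff_of_true e01 (by decide) | exact iff_of_true e01.symm (by decide)
        | exact iff_of_true e12 (by decide) | exact iff_of_true e12.symm (by decide)
        | exact iff_of_true e23 (by decide) | exact iff_of_true e23.symm (by decide)
        | exact iff_of_true e34 (by decide) | exact iff_of_true e34.symm (by decide)
        | exact iff_of_true e40 (by decide) | exact iff_of_true e40.symm (by decide)
        | exact iff_of_false a02 (by decide) | exact iff_of_false (fun h => a02 h.symm) (by decide)
        | exact iff_of_false a03 (by decide) | exact iff_of_false (fun h => a03 h.symm) (by decide)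
        | exact iff_of_false a13 (by decide) | exact iff_of_false (fun h => a13 h.symm) (by decide)
        | exact iff_of_false a14 (by decide) | exact iff_of_false (fun h => a14 h.symm) (by decide)
        | exact iff_of_false a24 (by decide) | exact iff_of_false (fun h => a24 h.symm) (by decide)

section buildArc

variable {V : Type*} {G : SimpleGraph V} {t : V}

theorem dsAux_buildArc {n : ℕ} [NeZero n] (hn : 6 ≤ n)
    (f : cycleGraph n ↪g doubleStar G t) (A : Fin n) (d : ℕ) (hd3 : 3 ≤ d) (hdn : d + 2 ≤ n)
    (hA : dsSpec G t (f (A + ((0:ℕ) : Fin n)))) (hB : dsSpec G t (f (A + ((d:ℕ) : Fin n))))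
    (hint : ∀ e : ℕ, 0 < e → e < d → ¬ dsSpec G t (f (A + (e : Fin n)))) :
    Nonempty (cycleGraph (d + 2) ↪g G) := by
  set w : ℕ → V ⊕ {v : V // v ∉ starSet G t} := fun e => f (A + (e : Fin n)) with hw
  -- uniformity of the interior
  have huni : ∀ e : ℕ, 1 ≤ e → e ≤ d - 1 → (dsInl G t (w e) ↔ dsInl G t (w 1)) := by
    intro e h1 h2
    have hsplit : ∀ y : ℕ, A + (1 : Fin n) + (y : Fin n) = A + ((1 + y : ℕ) : Fin n) := by
      intro y
      rw [Nat.cast_add, Nat.cast_one, add_assoc]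
    have := dsAux_prop hn f (A + (1 : Fin n)) (e - 1) (fun e' he' => by
      rw [hsplit e']
      exact hint (1 + e') (by omega) (by omega))
    rw [hsplit (e-1), show 1 + (e-1) = e by omega] at this
    simp only [hw]
    rw [show ((1:ℕ) : Fin n) = (1 : Fin n) from Nat.cast_one]
    exact this.symm
  -- side condition for faithfulness
  have hside : ∀ e1 e2 : ℕ, e1 ≤ d → e2 ≤ d →
      ((dsInl G t (w e1) ↔ dsInl G t (w e2)) ∨ dsSpec G t (w e1) ∨ dsSpec G t (w e2)) := by
    intro e1 e2 h1 h2
    rcases eq_or_ne e1 0 with rfl | h10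
    · exact Or.inr (Or.inl hA)
    rcases eq_or_ne e1 d with rfl | h1d
    · exact Or.inr (Or.inl hB)
    rcases eq_or_ne e2 0 with rfl | h20
    · exact Or.inr (Or.inr hA)
    rcases eq_or_ne e2 d with rfl | h2d
    · exact Or.inr (Or.inr hB)
    · exact Or.inl ((huni e1 (by omega) (by omega)).trans (huni e2 (by omega) (by omega)).symm)
  have hpair : ∀ e1 e2 : ℕ, e1 ≤ d → e2 ≤ d →
      (G.Adj (dsFold G t (w e1)) (dsFold G t (w e2)) ↔ (e1 = e2 + 1 ∨ e2 = e1 + 1)) ∧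
        (e1 ≠ e2 → dsFold G t (w e1) ≠ dsFold G t (w e2)) := by
    intro e1 e2 h1 h2
    have hf := dsAux_faith (G := G) (t := t) (hside e1 e2 h1 h2)
    constructor
    · rw [hf.1, hw]
      simp only []
      rw [f.map_rel_iff, dsAux_iadjgen hn A e1 e2 (by omega) (by omega)]
      constructor
      · rintro (h | h | ⟨h, h'⟩ | ⟨h, h'⟩) <;> omega
      · rintro (h | h) <;> [exact Or.inl h; exact Or.inr (Or.inl h)]
    · intro hne
      refine hf.2 (fun heq => hne ?_)
      have := f.injective heq
      rwa [dsAux_ieqgen A e1 e2 (by omega) (by omega)] at this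
  -- relations with t
  have hDadj01 : (doubleStar G t).Adj (w 0) (w 1) := by
    rw [hw]; simp only []
    rw [f.map_rel_iff, dsAux_iadjgen hn A 0 1 (by omega) (by omega)]
    omega
  have hDadjd : (doubleStar G t).Adj (w d) (w (d-1)) := by
    rw [hw]; simp only []
    rw [f.map_rel_iff, dsAux_iadjgen hn A d (d-1) (by omega) (by omega)]
    omega
  have htadj0 : G.Adj t (dsFold G t (w 0)) :=
    dsAux_spec_adj_t hA (hint 1 (by omega) (by omega)) hDadj01
  have htadjd : G.Adj t (dsFold G t (w d)) :=
    dsAux_spec_adj_t hB (hint (d-1) (by omega) (by omega)) hDadjd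
  have htiff : ∀ e : ℕ, e ≤ d → (G.Adj t (dsFold G t (w e)) ↔ (e = 0 ∨ e = d)) := by
    intro e he
    constructor
    · intro h
      by_contra hc
      push_neg at hc
      exact (dsAux_not_star (dsAux_nonspec_fold (hint e (by omega) (by omega)))).2 h
    · rintro (rfl | rfl) <;> [exact htadj0; exact htadjd]
  have htne : ∀ e : ℕ, e ≤ d → t ≠ dsFold G t (w e) := by
    intro e he
    rcases eq_or_ne e 0 with rfl | h0
    · exact htadj0.ne
    rcases eq_or_ne e d with rfl | hd
    · exact htadjd.ne
    · exact fun h => (dsAux_not_star (dsAux_nonspec_fold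
        (hint e (by omega) (by omega)))).1 h.symm
  -- the cycle
  let g : Fin (d + 2) → V := fun k => if k.val = 0 then t else dsFold G t (w (k.val - 1))
  have hginj : Function.Injective g := by
    intro k l h
    simp only [g] at h
    split_ifs at h with h1 h2 h2
    · exact Fin.ext (by omega)
    · exact absurd h (htne (l.val - 1) (by have := l.isLt; omega))
    · exact absurd h.symm (htne (k.val - 1) (by have := k.isLt; omega))
    · by_contra hkl
      exact (hpair (k.val - 1) (l.val - 1) (by have := k.isLt; omega) (by have := l.isLt; omega)).2
        (fun he => hkl (Fin.ext (by omega))) h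
  refine ⟨⟨⟨g, hginj⟩, ?_⟩⟩
  intro k l
  show G.Adj (g k) (g l) ↔ _
  have hk := k.isLt; have hl := l.isLt
  rw [dsAux_cycval]
  simp only [g]
  split_ifs with h1 h2 h2
  · exact iff_of_false (G.irrefl) (by omega)
  · rw [htiff (l.val - 1) (by omega)]
    omega
  · rw [G.adj_comm, htiff (k.val - 1) (by omega)]
    omega
  · rw [(hpair (k.val - 1) (l.val - 1) (by omega) (by omega)).1]
    omega

end buildArc

section runFacts

variable {V : Type*} {G : SimpleGraph V} {t : V}

theorem dsAux_runFacts {n : ℕ} [NeZero n] (hn : 6 ≤ n)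
    (f : cycleGraph n ↪g doubleStar G t) (p p' : Fin n)
    (hp : ¬ dsSpec G t (f p)) (hp' : ¬ dsSpec G t (f p'))
    (hdiff : ¬ (dsInl G t (f p) ↔ dsInl G t (f p')))
    (hs : ∃ s, dsSpec G t (f s)) :
    ∃ m1 m2 : ℕ, 1 ≤ m1 ∧ 1 ≤ m2 ∧ m1 + m2 ≤ n - 2 ∧
      dsSpec G t (f (p + ((m1 : ℕ) : Fin n))) ∧
      dsSpec G t (f (p + ((n - m2 : ℕ) : Fin n))) ∧
      (∀ e : ℕ, 0 < e → e < m1 → ¬ dsSpec G t (f (p + (e : Fin n)))) ∧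
      (∀ e : ℕ, 0 < e → e < m2 → ¬ dsSpec G t (f (p + ((n - e : ℕ) : Fin n)))) := by
  classical
  obtain ⟨s, hsspec⟩ := hs
  have hsp : s ≠ p := fun h => hp (h ▸ hsspec)
  have hkey : p + (((s - p).val : ℕ) : Fin n) = s := by
    rw [Fin.cast_val_eq_self (s - p), add_comm, sub_add_cancel]
  have hvalpos : 0 < (s - p).val := by
    rcases Nat.eq_zero_or_pos (s - p).val with h | h
    · exfalso
      have : s - p = 0 := Fin.ext (by simp [h])
      exact hsp (by rwa [sub_eq_zero] at this)
    · exact h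
  have hvallt : (s - p).val < n := (s - p).isLt
  have hPex : ∃ e : ℕ, 0 < e ∧ e < n ∧ dsSpec G t (f (p + (e : Fin n))) :=
    ⟨(s - p).val, hvalpos, hvallt, by rw [hkey]; exact hsspec⟩
  have hQex : ∃ e : ℕ, 0 < e ∧ e < n ∧ dsSpec G t (f (p + ((n - e : ℕ) : Fin n))) :=
    ⟨n - (s - p).val, by omega, by omega, by
      rw [show n - (n - (s - p).val) = (s - p).val by omega, hkey]; exact hsspec⟩
  set m1 := Nat.find hPex with hm1
  set m2 := Nat.find hQex with hm2
  obtain ⟨hm1pos, hm1lt, hm1spec⟩ := Nat.find_spec hPex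
  obtain ⟨hm2pos, hm2lt, hm2spec⟩ := Nat.find_spec hQex
  have hm1min : ∀ e : ℕ, 0 < e → e < m1 → ¬ dsSpec G t (f (p + (e : Fin n))) := by
    intro e he1 he2 hspec
    exact Nat.find_min hPex he2 ⟨he1, by omega, hspec⟩
  have hm2min : ∀ e : ℕ, 0 < e → e < m2 → ¬ dsSpec G t (f (p + ((n - e : ℕ) : Fin n))) := by
    intro e he1 he2 hspec
    exact Nat.find_min hQex he2 ⟨he1, by omega, hspec⟩
  have haddcast : ∀ (y z : ℕ), (p + (y : Fin n)) + (z : Fin n) = p + ((y + z : ℕ) : Fin n) := by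
    intro y z; rw [Nat.cast_add, add_assoc]
  have hwrap : ∀ y : ℕ, ((n + y : ℕ) : Fin n) = (y : Fin n) := by
    intro y; rw [Nat.cast_add, Fin.natCast_self, zero_add]
  -- position of p'
  set e0 := (p' - p).val with he0
  have hkey' : p + ((e0 : ℕ) : Fin n) = p' := by
    rw [he0, Fin.cast_val_eq_self (p' - p), add_comm, sub_add_cancel]
  have he0pos : 0 < e0 := by
    rcases Nat.eq_zero_or_pos e0 with h | h
    · exfalso
      have hpp : p' - p = 0 := Fin.ext (by simp [he0] at h ⊢; omega)
      rw [sub_eq_zero] at hpp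
      exact hdiff (by rw [hpp])
    · exact h
  have he0lt : e0 < n := (p' - p).isLt
  -- p' is not inside the forward window
  have hnot1 : ¬ (e0 < m1) := by
    intro hlt
    refine hdiff ?_
    have := dsAux_prop hn f p e0 (fun e' he' => by
      rcases Nat.eq_zero_or_pos e' with rfl | hpos
      · rw [Nat.cast_zero, add_zero]; exact hp
      · exact hm1min e' hpos (by omega))
    rwa [hkey'] at this
  -- p' is not inside the backward window
  have hnot2 : ¬ (n - e0 < m2) := by
    intro hlt
    refine hdiff (Iff.symm ?_)
    have := dsAux_prop hn f p' (n - e0) (fun e' he' => by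
      rw [← hkey', haddcast]
      rcases Nat.eq_zero_or_pos e' with rfl | hpos
      · rw [show e0 + 0 = e0 by omega, hkey']; exact hp'
      rcases eq_or_ne e' (n - e0) with rfl | hne
      · rw [show e0 + (n - e0) = n + 0 by omega, hwrap, Nat.cast_zero, add_zero]
        exact hp
      · have h1 : e0 + e' = n - (n - e0 - e') := by omega
        rw [h1]
        exact hm2min (n - e0 - e') (by omega) (by omega))
    rw [← hkey', haddcast, show e0 + (n - e0) = n + 0 by omega, hwrap, Nat.cast_zero,
      add_zero] at this
    rw [hkey'] at this
    exact this
  have hne1 : e0 ≠ m1 := by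
    intro h
    exact hp' (by rw [← hkey', h]; exact hm1spec)
  have hne2 : e0 ≠ n - m2 := by
    intro h
    exact hp' (by rw [← hkey', h]; exact hm2spec)
  exact ⟨m1, m2, hm1pos, hm2pos, by omega, hm1spec, hm2spec, hm1min, hm2min⟩

end runFacts

/-- **Lemma (long cycles in a star double).** If the double of `Γ` along the star of a
vertex `t` contains an induced `n`-cycle with `n ≥ 6`, then `Γ` contains an induced
`m`-cycle for some `5 ≤ m ≤ n`. -/
theorem cycle_of_cycle_in_doubleStar {V : Type*} [Fintype V] (G : SimpleGraph V) (t : V)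
    (n : ℕ) (hn : 6 ≤ n) (h : Nonempty (cycleGraph n ↪g doubleStar G t)) :
    ∃ m : ℕ, 5 ≤ m ∧ m ≤ n ∧ Nonempty (cycleGraph m ↪g G) := by
  classical
  obtain ⟨f⟩ := h
  haveI : NeZero n := ⟨by omega⟩
  by_cases hfault : ∃ (i j : Fin n) (a : V) (x : {v : V // v ∉ starSet G t}),
      f i = Sum.inl a ∧ a ∉ starSet G t ∧ f j = Sum.inr x ∧
      ¬ (cycleGraph n).Adj i j ∧ (G.Adj a x.1 ∨ a = x.1)
  case neg =>
    -- No "fault": the fold of the whole cycle is an induced `n`-cycle in `G`.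
    have hfaith : ∀ i j : Fin n, i ≠ j → ¬ (cycleGraph n).Adj i j →
        ¬ G.Adj (dsFold G t (f i)) (dsFold G t (f j)) ∧
          dsFold G t (f i) ≠ dsFold G t (f j) := by
      intro i j hne hnadj
      by_cases hcond : (dsInl G t (f i) ↔ dsInl G t (f j)) ∨ dsSpec G t (f i) ∨ dsSpec G t (f j)
      · have hf := dsAux_faith hcond
        have hD : ¬ (doubleStar G t).Adj (f i) (f j) := fun hd => hnadj (f.map_rel_iff.mp hd)
        exact ⟨fun hadj => hD (hf.1.mp hadj), hf.2 (fun heq => hne (f.injective heq))⟩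
      · rw [not_or, not_or] at hcond
        obtain ⟨hciff, hcsi, hcsj⟩ := hcond
        rcases hfi : f i with a | x <;> rcases hfj : f j with b | y
        · exact absurd (show dsInl G t (f i) ↔ dsInl G t (f j) by
            rw [hfi, hfj]; exact ⟨fun _ => ⟨b, rfl⟩, fun _ => ⟨a, rfl⟩⟩) hciff
        · have haS : a ∉ starSet G t := fun hS => hcsi (by rw [hfi]; exact ⟨a, rfl, hS⟩)
          have hno : ¬ (G.Adj a y.1 ∨ a = y.1) :=
            fun hor => hfault ⟨i, j, a, y, hfi, haS, hfj, hnadj, hor⟩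
          push_neg at hno
          exact ⟨hno.1, fun heq => hno.2 heq⟩
        · have hbS : b ∉ starSet G t := fun hS => hcsj (by rw [hfj]; exact ⟨b, rfl, hS⟩)
          have hnadj' : ¬ (cycleGraph n).Adj j i := fun hadj => hnadj hadj.symm
          have hno : ¬ (G.Adj b x.1 ∨ b = x.1) :=
            fun hor => hfault ⟨j, i, b, x, hfj, hbS, hfi, hnadj', hor⟩
          push_neg at hno
          exact ⟨fun hadj => hno.1 hadj.symm, fun heq => hno.2 heq.symm⟩
        · exact absurd (show dsInl G t (f i) ↔ dsInl G t (f j) by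
            rw [hfi, hfj]
            exact ⟨fun hh => absurd hh (by rintro ⟨c, hc⟩; cases hc),
              fun hh => absurd hh (by rintro ⟨c, hc⟩; cases hc)⟩) hciff
    refine ⟨n, by omega, le_rfl, ⟨⟨⟨fun i => dsFold G t (f i), ?_⟩, ?_⟩⟩⟩
    · intro i j hij
      have hij' : dsFold G t (f i) = dsFold G t (f j) := hij
      by_contra hne
      by_cases hadj : (cycleGraph n).Adj i j
      · have hfold := dsAux_adj_fold (f.map_rel_iff.mpr hadj)
        rw [hij'] at hfold
        exact G.irrefl hfold
      · exact (hfaith i j hne hadj).2 hij'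
    · intro i j
      constructor
      · intro hadj
        by_contra hnadj
        rcases eq_or_ne i j with rfl | hne
        · exact G.irrefl hadj
        · exact (hfaith i j hne hnadj).1 hadj
      · intro hadj
        exact dsAux_adj_fold (f.map_rel_iff.mpr hadj)
  case pos =>
    obtain ⟨i, j, a, x, hfi, haS, hfj, hnadj, hax⟩ := hfault
    have hnsi : ¬ dsSpec G t (f i) := by
      rintro ⟨b, hb, hbS⟩
      rw [hfi] at hb
      exact haS (Sum.inl.inj hb ▸ hbS)
    have hnsj : ¬ dsSpec G t (f j) := by
      rintro ⟨b, hb, _⟩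
      rw [hfj] at hb
      cases hb
    have hdiffij : ¬ (dsInl G t (f i) ↔ dsInl G t (f j)) := by
      intro hiff
      obtain ⟨b, hb⟩ := hiff.mp ⟨a, hfi⟩
      rw [hfj] at hb
      cases hb
    have hspec_ex : ∃ s, dsSpec G t (f s) := by
      by_contra hno
      push_neg at hno
      refine hdiffij ?_
      have hkey : i + (((j - i).val : ℕ) : Fin n) = j := by
        rw [Fin.cast_val_eq_self, add_comm, sub_add_cancel]
      have := dsAux_prop hn f i ((j - i).val) (fun e' _ => hno _)
      rwa [hkey] at this
    obtain ⟨mi1, mi2, hmi1, hmi2, hmisum, hmi1s, hmi2s, hmi1min, hmi2min⟩ :=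
      dsAux_runFacts hn f i j hnsi hnsj hdiffij hspec_ex
    obtain ⟨mj1, mj2, hmj1, hmj2, hmjsum, hmj1s, hmj2s, hmj1min, hmj2min⟩ :=
      dsAux_runFacts hn f j i hnsj hnsi (fun hh => hdiffij hh.symm) hspec_ex
    have harc : ∀ (p : Fin n) (m1 m2 : ℕ), ¬ dsSpec G t (f p) → 1 ≤ m1 → 1 ≤ m2 →
        m1 + m2 ≤ n - 2 → 3 ≤ m1 + m2 →
        dsSpec G t (f (p + ((m1 : ℕ) : Fin n))) →
        dsSpec G t (f (p + ((n - m2 : ℕ) : Fin n))) →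
        (∀ e : ℕ, 0 < e → e < m1 → ¬ dsSpec G t (f (p + (e : Fin n)))) →
        (∀ e : ℕ, 0 < e → e < m2 → ¬ dsSpec G t (f (p + ((n - e : ℕ) : Fin n)))) →
        ∃ m : ℕ, 5 ≤ m ∧ m ≤ n ∧ Nonempty (cycleGraph m ↪g G) := by
      intro p m1 m2 hpns h1 h2 hsum h3 hs1 hs2 hmin1 hmin2
      have haddcast : ∀ (y z : ℕ), (p + (y : Fin n)) + (z : Fin n) = p + ((y + z : ℕ) : Fin n) :=
        fun y z => by rw [Nat.cast_add, add_assoc]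
      have hwrap : ∀ y : ℕ, ((n + y : ℕ) : Fin n) = (y : Fin n) :=
        fun y => by rw [Nat.cast_add, Fin.natCast_self, zero_add]
      refine ⟨m1 + m2 + 2, by omega, by omega,
        dsAux_buildArc hn f (p + ((n - m2 : ℕ) : Fin n)) (m1 + m2) h3 (by omega) ?_ ?_ ?_⟩
      · rw [Nat.cast_zero, add_zero]
        exact hs2
      · rw [haddcast, show n - m2 + (m1 + m2) = n + m1 by omega, hwrap]
        exact hs1
      · intro e hepos helt
        rw [haddcast]
        rcases lt_trichotomy e m2 with hlt | heq | hgt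
        · rw [show n - m2 + e = n - (m2 - e) by omega]
          exact hmin2 (m2 - e) (by omega) (by omega)
        · rw [show n - m2 + e = n + 0 by omega, hwrap, Nat.cast_zero, add_zero]
          exact hpns
        · rw [show n - m2 + e = n + (e - m2) by omega, hwrap]
          exact hmin1 (e - m2) (by omega) (by omega)
    by_cases hbig : 3 ≤ mi1 + mi2
    · exact harc i mi1 mi2 hnsi hmi1 hmi2 hmisum hbig hmi1s hmi2s hmi1min hmi2min
    by_cases hbigj : 3 ≤ mj1 + mj2
    · exact harc j mj1 mj2 hnsj hmj1 hmj2 hmjsum hbigj hmj1s hmj2s hmj1min hmj2min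
    -- Endgame: both runs are singletons, all four flanks are special.
    have hmi1e : mi1 = 1 := by omega
    have hmi2e : mi2 = 1 := by omega
    have hmj1e : mj1 = 1 := by omega
    have hmj2e : mj2 = 1 := by omega
    rw [hmi1e] at hmi1s; rw [hmi2e] at hmi2s; rw [hmj1e] at hmj1s; rw [hmj2e] at hmj2s
    set E : ℕ → V ⊕ {v : V // v ∉ starSet G t} := fun e => f (j + (e : Fin n)) with hE
    have haddE : ∀ (y z : ℕ), (j + (y : Fin n)) + (z : Fin n) = j + ((y + z : ℕ) : Fin n) :=
      fun y z => by rw [Nat.cast_add, add_assoc]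
    have hwrap : ∀ y : ℕ, ((n + y : ℕ) : Fin n) = (y : Fin n) :=
      fun y => by rw [Nat.cast_add, Fin.natCast_self, zero_add]
    have hE0 : j + ((0 : ℕ) : Fin n) = j := by rw [Nat.cast_zero, add_zero]
    obtain ⟨e0, he0def⟩ : ∃ e : ℕ, e = (i - j).val := ⟨_, rfl⟩
    have hkey : j + ((e0 : ℕ) : Fin n) = i := by
      rw [he0def, Fin.cast_val_eq_self, add_comm, sub_add_cancel]
    have he0lt : e0 < n := he0def ▸ (i - j).isLt
    have hij : i ≠ j := by
      intro hh
      rw [hh, hfj] at hfi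
      cases hfi
    have he0pos : 0 < e0 := by
      rcases Nat.eq_zero_or_pos e0 with hh | hh
      · exfalso
        have hz : i - j = 0 := Fin.ext (by rw [he0def] at hh; simpa using hh)
        rw [sub_eq_zero] at hz
        exact hij hz
      · exact hh
    have he0rng : 2 ≤ e0 ∧ e0 ≤ n - 2 := by
      have hnadj2 : ¬ (cycleGraph n).Adj (j + ((e0 : ℕ) : Fin n)) (j + ((0 : ℕ) : Fin n)) := by
        rw [hkey, hE0]
        exact hnadj
      rw [dsAux_iadjgen hn j e0 0 he0lt (by omega)] at hnadj2
      push_neg at hnadj2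
      omega
    have hs1 : dsSpec G t (E 1) := hmj1s
    have hsn1 : dsSpec G t (E (n - 1)) := hmj2s
    have hsp1 : dsSpec G t (E (e0 + 1)) := by
      show dsSpec G t (f (j + ((e0 + 1 : ℕ) : Fin n)))
      have hidx : j + ((e0 + 1 : ℕ) : Fin n) = i + ((1 : ℕ) : Fin n) := by
        rw [← hkey, haddE]
      rw [hidx]
      exact hmi1s
    have hsm1 : dsSpec G t (E (e0 - 1)) := by
      show dsSpec G t (f (j + ((e0 - 1 : ℕ) : Fin n)))
      have hidx : j + ((e0 - 1 : ℕ) : Fin n) = i + ((n - 1 : ℕ) : Fin n) := by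
        rw [← hkey, haddE, show e0 + (n - 1) = n + (e0 - 1) by omega, hwrap]
      rw [hidx]
      exact hmi2s
    have hnsE0 : ¬ dsSpec G t (E 0) := by
      show ¬ dsSpec G t (f (j + ((0 : ℕ) : Fin n)))
      rw [hE0]
      exact hnsj
    have hnsEe0 : ¬ dsSpec G t (E e0) := by
      show ¬ dsSpec G t (f (j + ((e0 : ℕ) : Fin n)))
      rw [hkey]
      exact hnsi
    have hfold0 : dsFold G t (E 0) = x.1 := by
      show dsFold G t (f (j + ((0 : ℕ) : Fin n))) = x.1
      rw [hE0, hfj]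
      rfl
    have hfolde0 : dsFold G t (E e0) = a := by
      show dsFold G t (f (j + ((e0 : ℕ) : Fin n))) = a
      rw [hkey, hfi]
      rfl
    have hDadjE : ∀ e1 e2 : ℕ, e1 < n → e2 < n →
        ((doubleStar G t).Adj (E e1) (E e2) ↔
          (e1 = e2 + 1 ∨ e2 = e1 + 1 ∨ (e1 = 0 ∧ e2 = n - 1) ∨ (e2 = 0 ∧ e1 = n - 1))) := by
      intro e1 e2 h1 h2
      show (doubleStar G t).Adj (f (j + (e1 : Fin n))) (f (j + (e2 : Fin n))) ↔ _
      rw [f.map_rel_iff, dsAux_iadjgen hn j e1 e2 h1 h2]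
    have hpairE : ∀ e1 e2 : ℕ, e1 < n → e2 < n →
        ((dsInl G t (E e1) ↔ dsInl G t (E e2)) ∨ dsSpec G t (E e1) ∨ dsSpec G t (E e2)) →
        ((G.Adj (dsFold G t (E e1)) (dsFold G t (E e2)) ↔
          (e1 = e2 + 1 ∨ e2 = e1 + 1 ∨ (e1 = 0 ∧ e2 = n - 1) ∨ (e2 = 0 ∧ e1 = n - 1))) ∧
          (e1 ≠ e2 → dsFold G t (E e1) ≠ dsFold G t (E e2))) := by
      intro e1 e2 h1 h2 hcond
      have hf := dsAux_faith hcond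
      refine ⟨hf.1.trans (hDadjE e1 e2 h1 h2), fun hne => hf.2 (fun heq => hne ?_)⟩
      have := f.injective heq
      rwa [dsAux_ieqgen j e1 e2 h1 h2] at this
    have hedge : ∀ e1 e2 : ℕ, e1 < n → e2 < n →
        (e1 = e2 + 1 ∨ e2 = e1 + 1 ∨ (e1 = 0 ∧ e2 = n - 1) ∨ (e2 = 0 ∧ e1 = n - 1)) →
        G.Adj (dsFold G t (E e1)) (dsFold G t (E e2)) :=
      fun e1 e2 h1 h2 hc => dsAux_adj_fold ((hDadjE e1 e2 h1 h2).mpr hc)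
    have haxadj : G.Adj a x.1 := by
      rcases hax with hh | heq
      · exact hh
      · exfalso
        have h1 : G.Adj (dsFold G t (E (n - 1))) (dsFold G t (E 0)) :=
          hedge (n - 1) 0 (by omega) (by omega) (by omega)
        rw [hfold0, ← heq, ← hfolde0] at h1
        have hc1 := (hpairE (n - 1) e0 (by omega) he0lt (Or.inr (Or.inl hsn1))).1.mp h1
        have h2 : G.Adj (dsFold G t (E 1)) (dsFold G t (E 0)) :=
          hedge 1 0 (by omega) (by omega) (by omega)
        rw [hfold0, ← heq, ← hfolde0] at h2
        have hc2 := (hpairE 1 e0 (by omega) he0lt (Or.inr (Or.inl hs1))).1.mp h2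
        omega
    have htx : ¬ G.Adj t x.1 ∧ x.1 ≠ t := ⟨(dsAux_not_star x.2).2, (dsAux_not_star x.2).1⟩
    have hta : ¬ G.Adj t a ∧ a ≠ t := ⟨(dsAux_not_star haS).2, (dsAux_not_star haS).1⟩
    have ht1 : G.Adj t (dsFold G t (E 1)) :=
      dsAux_spec_adj_t hs1 hnsE0 ((hDadjE 1 0 (by omega) (by omega)).mpr (by omega))
    have htn1 : G.Adj t (dsFold G t (E (n - 1))) :=
      dsAux_spec_adj_t hsn1 hnsE0 ((hDadjE (n - 1) 0 (by omega) (by omega)).mpr (by omega))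
    have htp1 : G.Adj t (dsFold G t (E (e0 + 1))) :=
      dsAux_spec_adj_t hsp1 hnsEe0 ((hDadjE (e0 + 1) e0 (by omega) he0lt).mpr (by omega))
    have htm1 : G.Adj t (dsFold G t (E (e0 - 1))) :=
      dsAux_spec_adj_t hsm1 hnsEe0 ((hDadjE (e0 - 1) e0 (by omega) he0lt).mpr (by omega))
    have hxS : ∀ e : ℕ, dsSpec G t (E e) → x.1 ≠ dsFold G t (E e) :=
      fun e hsp heq => x.2 (heq ▸ dsAux_spec_fold hsp)
    by_cases he0n2 : e0 = n - 2
    · -- shape M : t, E 1, x', a, E (e0-1)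
      refine ⟨5, by omega, by omega,
        dsAux_buildC5 G t (dsFold G t (E 1)) x.1 a (dsFold G t (E (e0 - 1)))
          ht1 ?_ haxadj.symm ?_ htm1.symm ?_ ?_ ?_ ?_ ?_ htx.2.symm hta.2.symm ?_ ?_ ?_⟩
      · have hh := hedge 1 0 (by omega) (by omega) (by omega)
        rwa [hfold0] at hh
      · have hh := hedge e0 (e0 - 1) he0lt (by omega) (by omega)
        rwa [hfolde0] at hh
      · exact htx.1
      · exact hta.1
      · rw [← hfolde0]
        intro hh
        have := (hpairE 1 e0 (by omega) he0lt (Or.inr (Or.inl hs1))).1.mp hh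
        omega
      · intro hh
        have := (hpairE 1 (e0 - 1) (by omega) (by omega) (Or.inr (Or.inl hs1))).1.mp hh
        omega
      · rw [← hfold0]
        intro hh
        have := (hpairE 0 (e0 - 1) (by omega) (by omega) (Or.inr (Or.inr hsm1))).1.mp hh
        omega
      · rw [← hfolde0]
        exact (hpairE 1 e0 (by omega) he0lt (Or.inr (Or.inl hs1))).2 (by omega)
      · exact (hpairE 1 (e0 - 1) (by omega) (by omega) (Or.inr (Or.inl hs1))).2 (by omega)
      · exact hxS (e0 - 1) hsm1
    · have hPgo : ¬ G.Adj (dsFold G t (E (n - 1))) (dsFold G t (E (e0 + 1))) →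
          ∃ m : ℕ, 5 ≤ m ∧ m ≤ n ∧ Nonempty (cycleGraph m ↪g G) := by
        intro hnuw
        -- shape P : t, E (n-1), x', a, E (e0+1)
        refine ⟨5, by omega, by omega,
          dsAux_buildC5 G t (dsFold G t (E (n - 1))) x.1 a (dsFold G t (E (e0 + 1)))
            htn1 ?_ haxadj.symm ?_ htp1.symm ?_ ?_ ?_ hnuw ?_ htx.2.symm hta.2.symm ?_ ?_ ?_⟩
        · have hh := hedge (n - 1) 0 (by omega) (by omega) (by omega)
          rwa [hfold0] at hh
        · have hh := hedge e0 (e0 + 1) he0lt (by omega) (by omega)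
          rwa [hfolde0] at hh
        · exact htx.1
        · exact hta.1
        · rw [← hfolde0]
          intro hh
          have := (hpairE (n - 1) e0 (by omega) he0lt (Or.inr (Or.inl hsn1))).1.mp hh
          omega
        · rw [← hfold0]
          intro hh
          have := (hpairE 0 (e0 + 1) (by omega) (by omega) (Or.inr (Or.inr hsp1))).1.mp hh
          omega
        · rw [← hfolde0]
          exact (hpairE (n - 1) e0 (by omega) he0lt (Or.inr (Or.inl hsn1))).2 (by omega)
        · exact (hpairE (n - 1) (e0 + 1) (by omega) (by omega) (Or.inr (Or.inl hsn1))).2 (by omega)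
        · exact hxS (e0 + 1) hsp1
      by_cases he0n3 : e0 = n - 3
      · by_cases huw : G.Adj (dsFold G t (E (n - 1))) (dsFold G t (E (e0 + 1)))
        · -- shape Z : t, E (n-1), x', a, E (e0-1)
          refine ⟨5, by omega, by omega,
            dsAux_buildC5 G t (dsFold G t (E (n - 1))) x.1 a (dsFold G t (E (e0 - 1)))
              htn1 ?_ haxadj.symm ?_ htm1.symm ?_ ?_ ?_ ?_ ?_ htx.2.symm hta.2.symm ?_ ?_ ?_⟩
          · have hh := hedge (n - 1) 0 (by omega) (by omega) (by omega)
            rwa [hfold0] at hh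
          · have hh := hedge e0 (e0 - 1) he0lt (by omega) (by omega)
            rwa [hfolde0] at hh
          · exact htx.1
          · exact hta.1
          · rw [← hfolde0]
            intro hh
            have := (hpairE (n - 1) e0 (by omega) he0lt (Or.inr (Or.inl hsn1))).1.mp hh
            omega
          · intro hh
            have := (hpairE (n - 1) (e0 - 1) (by omega) (by omega)
              (Or.inr (Or.inl hsn1))).1.mp hh
            omega
          · rw [← hfold0]
            intro hh
            have := (hpairE 0 (e0 - 1) (by omega) (by omega) (Or.inr (Or.inr hsm1))).1.mp hh
            omega
          · rw [← hfolde0]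
            exact (hpairE (n - 1) e0 (by omega) he0lt (Or.inr (Or.inl hsn1))).2 (by omega)
          · exact (hpairE (n - 1) (e0 - 1) (by omega) (by omega)
              (Or.inr (Or.inl hsn1))).2 (by omega)
          · exact hxS (e0 - 1) hsm1
        · exact hPgo huw
      · refine hPgo ?_
        intro hh
        have := (hpairE (n - 1) (e0 + 1) (by omega) (by omega) (Or.inr (Or.inl hsn1))).1.mp hh
        omega
end
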